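/- Key renamings compose horizontally: given lock telescopes Λ₁, Λ₂ : LockTele(n;m) and Θ₁, Θ₂ : LockTele(o;n), 2-cells β : locks(Λ₁) ⇒ locks(Λ₂) and α : locks(Θ₁) ⇒ locks(Θ₂), and an SFMTT expression t in scope Γ̂,Λ₁,Θ₁ at mode o, we have t[🔑^{β⋆α}(Λ₁,Θ₁ ⇒ Λ₂,Θ₂)@Γ̂] = (t[🔑^β(Λ₁⇒Λ₂)@Γ̂ , Θ₁])[🔑^α(Θ₁⇒Θ₂)@(Γ̂,Λ₂)] and also = (t[🔑^α(Θ₁⇒Θ₂)@(Γ̂,Λ₁)])[🔑^β(Λ₁⇒Λ₂)@Γ̂ , Θ₂], where ⋆ is horizontal composition of 2-cells and σ,Θ denotes locking the renaming σ by every lock in Θ. -/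

import Mathlib

set_option autoImplicit false

/-- A mode theory: a strict 2-category of modes, modalities and 2-cells. -/
structure ModeTheory : Type 1 where
  Mode : Type
  Hom : Mode → Mode → Type
  id : (m : Mode) → Hom m m
  comp : {m n o : Mode} → Hom m n → Hom n o → Hom m o
  id_comp : ∀ {m n : Mode} (μ : Hom m n), comp (id m) μ = μ
  comp_id : ∀ {m n : Mode} (μ : Hom m n), comp μ (id n) = μ
  comp_assoc : ∀ {m n o p : Mode} (μ : Hom m n) (ν : Hom n o) (ρ : Hom o p),
    comp (comp μ ν) ρ = comp μ (comp ν ρ)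
  Cell : {m n : Mode} → Hom m n → Hom m n → Type
  cid : {m n : Mode} → (μ : Hom m n) → Cell μ μ
  vcomp : {m n : Mode} → {μ ν ρ : Hom m n} → Cell μ ν → Cell ν ρ → Cell μ ρ
  hcomp : {m n o : Mode} → {μ μ' : Hom m n} → {ν ν' : Hom n o} →
    Cell μ μ' → Cell ν ν' → Cell (comp μ ν) (comp μ' ν')
  cid_vcomp : ∀ {m n : Mode} {μ ν : Hom m n} (α : Cell μ ν), vcomp (cid μ) α = α
  vcomp_cid : ∀ {m n : Mode} {μ ν : Hom m n} (α : Cell μ ν), vcomp α (cid ν) = α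
  vcomp_assoc : ∀ {m n : Mode} {μ₁ μ₂ μ₃ μ₄ : Hom m n}
    (α : Cell μ₁ μ₂) (β : Cell μ₂ μ₃) (γ : Cell μ₃ μ₄),
    vcomp (vcomp α β) γ = vcomp α (vcomp β γ)
  hcomp_cid : ∀ {m n o : Mode} (μ : Hom m n) (ν : Hom n o),
    hcomp (cid μ) (cid ν) = cid (comp μ ν)
  interchange : ∀ {m n o : Mode} {μ₁ μ₂ μ₃ : Hom m n} {ν₁ ν₂ ν₃ : Hom n o}
    (α : Cell μ₁ μ₂) (β : Cell μ₂ μ₃) (γ : Cell ν₁ ν₂) (δ : Cell ν₂ ν₃),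
    hcomp (vcomp α β) (vcomp γ δ) = vcomp (hcomp α γ) (hcomp β δ)
  id_hcomp : ∀ {m n : Mode} {μ ν : Hom m n} (α : Cell μ ν),
    HEq (hcomp (cid (id m)) α) α
  hcomp_id : ∀ {m n : Mode} {μ ν : Hom m n} (α : Cell μ ν),
    HEq (hcomp α (cid (id n))) α
  hcomp_assoc : ∀ {m n o p : Mode} {μ μ' : Hom m n} {ν ν' : Hom n o} {ρ ρ' : Hom o p}
    (α : Cell μ μ') (β : Cell ν ν') (γ : Cell ρ ρ'),
    HEq (hcomp (hcomp α β) γ) (hcomp α (hcomp β γ))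

namespace MTT

def castCell (M : ModeTheory) {m n : M.Mode} {μ μ' ν ν' : M.Hom m n}
    (h1 : μ = μ') (h2 : ν = ν') (α : M.Cell μ ν) : M.Cell μ' ν' := h1 ▸ h2 ▸ α

/-- Scoping contexts at a mode. -/
inductive SCtx (M : ModeTheory) : M.Mode → Type where
  | empty {m : M.Mode} : SCtx M m
  | lock {m n : M.Mode} (Γ : SCtx M n) (μ : M.Hom m n) : SCtx M m
  | ext {m n : M.Mode} (Γ : SCtx M n) (μ : M.Hom m n) : SCtx M n

/-- Lock telescopes from inner mode `m` to outer mode `n`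
(`cons` adds the outermost lock). -/
inductive LockTele (M : ModeTheory) : M.Mode → M.Mode → Type where
  | nil {m : M.Mode} : LockTele M m m
  | cons {m n k : M.Mode} (ρ : M.Hom k n) (Θ : LockTele M m k) : LockTele M m n

variable (M : ModeTheory)

/-- Composite modality of a lock telescope. -/
def locks {m : M.Mode} : ∀ {n : M.Mode}, LockTele M m n → M.Hom m n
  | _, .nil => M.id _
  | _, .cons ρ Θ => M.comp (locks Θ) ρ

/-- Appending a lock telescope to a scoping context. -/
def appendL {m : M.Mode} : ∀ {n : M.Mode}, LockTele M m n → SCtx M n → SCtx M m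
  | _, .nil, Γ => Γ
  | _, .cons ρ Θ, Γ => appendL Θ (SCtx.lock Γ ρ)

/-- Concatenation of lock telescopes (`appendLT Θ Λ` has `Λ` outermost、`Θ` innermost). -/
def appendLT {m k : M.Mode} (Θ : LockTele M m k) : ∀ {n : M.Mode},
    LockTele M k n → LockTele M m n
  | _, .nil => Θ
  | _, .cons ρ Λ => .cons ρ (appendLT Θ Λ)

/-- `Γ ,, Θ` : appending a lock telescope to a scoping context. -/
abbrev appL {m n : M.Mode} (Γ : SCtx M n) (Θ : LockTele M m n) : SCtx M m :=
  appendL M Θ Γ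

/-- `Λ ++ Θ` : concatenation of lock telescopes, `Λ` outermost. -/
abbrev appLT {m n k : M.Mode} (Λ : LockTele M k n) (Θ : LockTele M m k) :
    LockTele M m n := appendLT M Θ Λ

theorem appLT_nil {m n : M.Mode} (Λ : LockTele M m n) : appLT M Λ .nil = Λ := by
  induction Λ with
  | nil => rfl
  | cons ρ Λ ih => show LockTele.cons ρ (appLT M Λ .nil) = _; rw [ih]

theorem locks_append {m n k : M.Mode} (Λ : LockTele M k n) (Θ : LockTele M m k) :
    locks M (appLT M Λ Θ) = M.comp (locks M Θ) (locks M Λ) := by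
  induction Λ with
  | nil => show locks M Θ = M.comp (locks M Θ) (M.id _); rw [M.comp_id]
  | cons ρ Λ ih =>
      show M.comp (locks M (appLT M Λ Θ)) ρ = _
      rw [ih, M.comp_assoc]; rfl

theorem appL_append {m n k : M.Mode} (Γ : SCtx M n) (Λ : LockTele M k n)
    (Θ : LockTele M m k) : appL M (appL M Γ Λ) Θ = appL M Γ (appLT M Λ Θ) := by
  induction Λ with
  | nil => rfl
  | cons ρ Λ ih => exact ih (SCtx.lock Γ ρ)

theorem locks_cons_nil {m n : M.Mode} (μ : M.Hom m n) :
    locks M (LockTele.cons μ LockTele.nil) = μ := by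
  show M.comp (M.id m) μ = μ; exact M.id_comp μ

/-- Variables of the scoping context `Γ ,, Θ`. -/
def VarIn {m : M.Mode} : ∀ {n : M.Mode}, SCtx M n → LockTele M m n → Type
  | _, .empty, _ => PEmpty
  | _, .lock Γ ρ, Θ => VarIn Γ (.cons ρ Θ)
  | _, @SCtx.ext _ k _ Γ μ, Θ =>
      (Σ' (h : k = m), M.Cell (h ▸ μ) (locks M Θ)) ⊕ VarIn Γ Θ

/-- The zero variable `v0^α`. -/
def VarIn.vz {n m : M.Mode} {Γ : SCtx M n} {μ : M.Hom m n} {Θ : LockTele M m n}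
    (α : M.Cell μ (locks M Θ)) : VarIn M (SCtx.ext Γ μ) Θ := Sum.inl ⟨rfl, α⟩

/-- The successor variable `suc v`. -/
def VarIn.sucv {n m k : M.Mode} {Γ : SCtx M n} {μ : M.Hom k n} {Θ : LockTele M m n}
    (v : VarIn M Γ Θ) : VarIn M (SCtx.ext Γ μ) Θ := Sum.inr v

theorem varIn_append {m k : M.Mode} (Λ : LockTele M m k) :
    ∀ {n : M.Mode} (Γ : SCtx M n) (Θ : LockTele M k n),
      VarIn M (appL M Γ Θ) Λ = VarIn M Γ (appLT M Θ Λ)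
  | _, Γ, .nil => rfl
  | _, Γ, .cons ρ Θ => varIn_append Λ (SCtx.lock Γ ρ) Θ


/-- Substitution-free (SFMTT) expressions over a scoping context. -/
inductive Expr (M : ModeTheory) : ∀ {m : M.Mode}, SCtx M m → Type where
  | var {m : M.Mode} {Γ : SCtx M m} (v : VarIn M Γ LockTele.nil) : Expr M Γ
  | bool {m : M.Mode} {Γ : SCtx M m} : Expr M Γ
  | tt {m : M.Mode} {Γ : SCtx M m} : Expr M Γ
  | ff {m : M.Mode} {Γ : SCtx M m} : Expr M Γ
  | ifte {m : M.Mode} {Γ : SCtx M m} (A : Expr M (SCtx.ext Γ (M.id m)))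
      (s t t' : Expr M Γ) : Expr M Γ
  | arrow {m n : M.Mode} {Γ : SCtx M n} (μ : M.Hom m n)
      (A : Expr M (SCtx.lock Γ μ)) (B : Expr M (SCtx.ext Γ μ)) : Expr M Γ
  | lam {m n : M.Mode} {Γ : SCtx M n} (μ : M.Hom m n)
      (t : Expr M (SCtx.ext Γ μ)) : Expr M Γ
  | app {m n : M.Mode} {Γ : SCtx M n} (μ : M.Hom m n)
      (f : Expr M Γ) (t : Expr M (SCtx.lock Γ μ)) : Expr M Γ
  | modTy {m n : M.Mode} {Γ : SCtx M n} (μ : M.Hom m n)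
      (A : Expr M (SCtx.lock Γ μ)) : Expr M Γ
  | modTm {m n : M.Mode} {Γ : SCtx M n} (μ : M.Hom m n)
      (t : Expr M (SCtx.lock Γ μ)) : Expr M Γ
  | letmod {m n o : M.Mode} {Γ : SCtx M o} (μ : M.Hom m n) (ν : M.Hom n o)
      (A : Expr M (SCtx.lock (SCtx.lock Γ ν) μ)) (B : Expr M (SCtx.ext Γ ν))
      (t : Expr M (SCtx.lock Γ ν)) (s : Expr M (SCtx.ext Γ (M.comp μ ν))) : Expr M Γ

/-- Atomic SFMTT renamings. -/
inductive ARen (M : ModeTheory) : ∀ {m : M.Mode}, SCtx M m → SCtx M m → Type where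
  | done {m : M.Mode} {Γ : SCtx M m} : ARen M Γ SCtx.empty
  | id {m : M.Mode} {Γ : SCtx M m} : ARen M Γ Γ
  | wk {m k : M.Mode} {Γ Δ : SCtx M m} (σ : ARen M Γ Δ) (μ : M.Hom k m) :
      ARen M (SCtx.ext Γ μ) Δ
  | lock {m n : M.Mode} {Γ Δ : SCtx M n} (σ : ARen M Γ Δ) (μ : M.Hom m n) :
      ARen M (SCtx.lock Γ μ) (SCtx.lock Δ μ)
  | key {m n : M.Mode} (Γ : SCtx M m) (Θ Ψ : LockTele M n m)
      (α : M.Cell (locks M Θ) (locks M Ψ)) : ARen M (appL M Γ Ψ) (appL M Γ Θ)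
  | ext {m n : M.Mode} {Γ Δ : SCtx M n} (σ : ARen M Γ Δ) {μ : M.Hom m n}
      (v : VarIn M Γ (LockTele.cons μ LockTele.nil)) : ARen M Γ (SCtx.ext Δ μ)

/-- Atomic SFMTT substitutions. -/
inductive ASub (M : ModeTheory) : ∀ {m : M.Mode}, SCtx M m → SCtx M m → Type where
  | done {m : M.Mode} {Γ : SCtx M m} : ASub M Γ SCtx.empty
  | id {m : M.Mode} {Γ : SCtx M m} : ASub M Γ Γ
  | wk {m k : M.Mode} {Γ Δ : SCtx M m} (σ : ASub M Γ Δ) (μ : M.Hom k m) :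
      ASub M (SCtx.ext Γ μ) Δ
  | lock {m n : M.Mode} {Γ Δ : SCtx M n} (σ : ASub M Γ Δ) (μ : M.Hom m n) :
      ASub M (SCtx.lock Γ μ) (SCtx.lock Δ μ)
  | key {m n : M.Mode} (Γ : SCtx M m) (Θ Ψ : LockTele M n m)
      (α : M.Cell (locks M Θ) (locks M Ψ)) : ASub M (appL M Γ Ψ) (appL M Γ Θ)
  | ext {m n : M.Mode} {Γ Δ : SCtx M n} (σ : ASub M Γ Δ) {μ : M.Hom m n}
      (t : Expr M (SCtx.lock Γ μ)) : ASub M Γ (SCtx.ext Δ μ)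

/-- Action of a 2-cell between lock telescopes on variables. -/
def transf {n k : M.Mode} {Θ Ψ : LockTele M n k}
    (γ : M.Cell (locks M Θ) (locks M Ψ)) :
    ∀ {l : M.Mode} (Γ : SCtx M l) (Λ : LockTele M k l),
      VarIn M Γ (appLT M Λ Θ) → VarIn M Γ (appLT M Λ Ψ)
  | _, .empty, _, v => PEmpty.elim v
  | _, .lock Γ ρ, Λ, v => transf γ Γ (.cons ρ Λ) v
  | _, .ext Γ μ, Λ, v =>
      match v with
      | Sum.inl ⟨h, β⟩ =>
          Sum.inl ⟨h, M.vcomp β (castCell M (locks_append M Λ Θ).symm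
            (locks_append M Λ Ψ).symm (M.hcomp γ (M.cid (locks M Λ))))⟩
      | Sum.inr w => Sum.inr (transf γ Γ Λ w)


/-- The zero variable used in liftings, annotated with an identity 2-cell. -/
def vzeroLift {m n : M.Mode} {Γ : SCtx M n} (μ : M.Hom m n) :
    VarIn M (SCtx.ext Γ μ) (LockTele.cons μ LockTele.nil) :=
  Sum.inl ⟨rfl, castCell M rfl (locks_cons_nil M μ).symm (M.cid μ)⟩

/-- Action of an atomic renaming under a lock telescope on a variable. -/
def arenVar : ∀ {m : M.Mode} {Γ Δ : SCtx M m}, ARen M Γ Δ →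
    ∀ {n : M.Mode} (Λ : LockTele M n m), VarIn M Δ Λ → VarIn M Γ Λ
  | _, _, _, .id, _, _, v => v
  | _, _, _, .done, _, _, v => PEmpty.elim v
  | _, _, _, .wk σ _, _, Λ, v => Sum.inr (arenVar σ Λ v)
  | _, _, _, .lock σ μ, _, Λ, v => arenVar σ (.cons μ Λ) v
  | _, _, _, .key Γ₀ Θ Ψ α, _, Λ, v =>
      cast (varIn_append M Λ Γ₀ Ψ).symm
        (transf M (castCell M (locks_append M Θ Λ).symm (locks_append M Ψ Λ).symm
            (M.hcomp (M.cid (locks M Λ)) α)) Γ₀ LockTele.nil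
          (cast (varIn_append M Λ Γ₀ Θ) v))
  | _, _, _, .ext σ w, _, Λ, v =>
      match v with
      | Sum.inl ⟨h, β⟩ =>
          (by cases h; exact
            transf M (castCell M (locks_cons_nil M _).symm rfl β) _ LockTele.nil w)
      | Sum.inr v' => arenVar σ Λ v'

/-- The weakening atomic renaming `π`. -/
def piA {m k : M.Mode} {Γ : SCtx M m} (μ : M.Hom k m) : ARen M (SCtx.ext Γ μ) Γ :=
  ARen.wk ARen.id μ

/-- Lifting of an atomic renaming. -/
def liftA {m k : M.Mode} {Γ Δ : SCtx M m} (σ : ARen M Γ Δ) (μ : M.Hom k m) :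
    ARen M (SCtx.ext Γ μ) (SCtx.ext Δ μ) :=
  ARen.ext (ARen.wk σ μ) (vzeroLift M μ)

/-- Locking an atomic renaming by all locks of a lock telescope. -/
def lockTeleA {m : M.Mode} {Γ Δ : SCtx M m} (σ : ARen M Γ Δ) :
    ∀ {n : M.Mode} (Λ : LockTele M n m), ARen M (appL M Γ Λ) (appL M Δ Λ)
  | _, .nil => σ
  | _, .cons ρ Λ => lockTeleA (ARen.lock σ ρ) Λ

/-- Action of an atomic renaming on an SFMTT expression. -/
def arenExpr : ∀ {m : M.Mode} {Δ : SCtx M m}, Expr M Δ →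
    ∀ {Γ : SCtx M m}, ARen M Γ Δ → Expr M Γ
  | _, _, .var v, _, σ => .var (arenVar M σ LockTele.nil v)
  | _, _, .bool, _, _ => .bool
  | _, _, .tt, _, _ => .tt
  | _, _, .ff, _, _ => .ff
  | _, _, .ifte A s t t', _, σ =>
      .ifte (arenExpr A (liftA M σ (M.id _))) (arenExpr s σ) (arenExpr t σ) (arenExpr t' σ)
  | _, _, .arrow μ A B, _, σ =>
      .arrow μ (arenExpr A (ARen.lock σ μ)) (arenExpr B (liftA M σ μ))
  | _, _, .lam μ t, _, σ => .lam μ (arenExpr t (liftA M σ μ))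
  | _, _, .app μ f t, _, σ => .app μ (arenExpr f σ) (arenExpr t (ARen.lock σ μ))
  | _, _, .modTy μ A, _, σ => .modTy μ (arenExpr A (ARen.lock σ μ))
  | _, _, .modTm μ t, _, σ => .modTm μ (arenExpr t (ARen.lock σ μ))
  | _, _, .letmod μ ν A B t s, _, σ =>
      .letmod μ ν (arenExpr A (ARen.lock (ARen.lock σ ν) μ)) (arenExpr B (liftA M σ ν))
        (arenExpr t (ARen.lock σ ν)) (arenExpr s (liftA M σ (M.comp μ ν)))


/-- View a variable of `Γ ,, Λ` as a variable of the full context. -/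
def toVarNil {n m : M.Mode} {Γ : SCtx M n} {Λ : LockTele M m n}
    (v : VarIn M Γ Λ) : VarIn M (appL M Γ Λ) LockTele.nil :=
  cast (by rw [varIn_append, appLT_nil]) v

/-- View a variable of `Γ ,, Λ` as an expression. -/
def varExpr {n m : M.Mode} {Γ : SCtx M n} {Λ : LockTele M m n}
    (v : VarIn M Γ Λ) : Expr M (appL M Γ Λ) :=
  Expr.var (toVarNil M v)

/-- Action of an atomic substitution under a lock telescope on a variable. -/
def asubVar : ∀ {m : M.Mode} {Γ Δ : SCtx M m}, ASub M Γ Δ →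
    ∀ {n : M.Mode} (Λ : LockTele M n m), VarIn M Δ Λ → Expr M (appL M Γ Λ)
  | _, _, _, .id, _, Λ, v => varExpr M v
  | _, _, _, .done, _, _, v => PEmpty.elim v
  | _, _, _, .wk σ μ, _, Λ, v =>
      arenExpr M (asubVar σ Λ v) (lockTeleA M (piA M μ) Λ)
  | _, _, _, .lock σ μ, _, Λ, v => asubVar σ (.cons μ Λ) v
  | _, _, _, .key Γ₀ Θ Ψ α, _, Λ, v =>
      varExpr M (cast (varIn_append M Λ Γ₀ Ψ).symm
        (transf M (castCell M (locks_append M Θ Λ).symm (locks_append M Ψ Λ).symm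
            (M.hcomp (M.cid (locks M Λ)) α)) Γ₀ LockTele.nil
          (cast (varIn_append M Λ Γ₀ Θ) v)))
  | _, _, _, @ASub.ext _ _ _ Γ Δ σ μ t, _, Λ, v =>
      match v with
      | Sum.inl ⟨h, β⟩ =>
          (by cases h; exact
            arenExpr M t (ARen.key Γ (LockTele.cons μ LockTele.nil) Λ
              (castCell M (locks_cons_nil M μ).symm rfl β)))
      | Sum.inr v' => asubVar σ Λ v'

/-- Lifting of an atomic substitution. -/
def liftS {m k : M.Mode} {Γ Δ : SCtx M m} (σ : ASub M Γ Δ) (μ : M.Hom k m) :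
    ASub M (SCtx.ext Γ μ) (SCtx.ext Δ μ) :=
  ASub.ext (ASub.wk σ μ) (Expr.var (vzeroLift M μ))

/-- Locking an atomic substitution by all locks of a lock telescope. -/
def lockTeleS {m : M.Mode} {Γ Δ : SCtx M m} (σ : ASub M Γ Δ) :
    ∀ {n : M.Mode} (Λ : LockTele M n m), ASub M (appL M Γ Λ) (appL M Δ Λ)
  | _, .nil => σ
  | _, .cons ρ Λ => lockTeleS (ASub.lock σ ρ) Λ

/-- Action of an atomic substitution on an SFMTT expression. -/
def asubExpr : ∀ {m : M.Mode} {Δ : SCtx M m}, Expr M Δ →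
    ∀ {Γ : SCtx M m}, ASub M Γ Δ → Expr M Γ
  | _, _, .var v, _, σ => asubVar M σ LockTele.nil v
  | _, _, .bool, _, _ => .bool
  | _, _, .tt, _, _ => .tt
  | _, _, .ff, _, _ => .ff
  | _, _, .ifte A s t t', _, σ =>
      .ifte (asubExpr A (liftS M σ (M.id _))) (asubExpr s σ) (asubExpr t σ) (asubExpr t' σ)
  | _, _, .arrow μ A B, _, σ =>
      .arrow μ (asubExpr A (ASub.lock σ μ)) (asubExpr B (liftS M σ μ))
  | _, _, .lam μ t, _, σ => .lam μ (asubExpr t (liftS M σ μ))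
  | _, _, .app μ f t, _, σ => .app μ (asubExpr f σ) (asubExpr t (ASub.lock σ μ))
  | _, _, .modTy μ A, _, σ => .modTy μ (asubExpr A (ASub.lock σ μ))
  | _, _, .modTm μ t, _, σ => .modTm μ (asubExpr t (ASub.lock σ μ))
  | _, _, .letmod μ ν A B t s, _, σ =>
      .letmod μ ν (asubExpr A (ASub.lock (ASub.lock σ ν) μ)) (asubExpr B (liftS M σ ν))
        (asubExpr t (ASub.lock σ ν)) (asubExpr s (liftS M σ (M.comp μ ν)))


/-- Regular SFMTT renamings: finite sequences of atomic renamings. -/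
inductive Ren (M : ModeTheory) : ∀ {m : M.Mode}, SCtx M m → SCtx M m → Type where
  | id {m : M.Mode} {Γ : SCtx M m} : Ren M Γ Γ
  | snoc {m : M.Mode} {Γ Δ Ξ : SCtx M m} (σ : Ren M Δ Ξ) (τ : ARen M Γ Δ) : Ren M Γ Ξ

/-- Regular SFMTT substitutions: finite sequences of atomic substitutions. -/
inductive Sub (M : ModeTheory) : ∀ {m : M.Mode}, SCtx M m → SCtx M m → Type where
  | id {m : M.Mode} {Γ : SCtx M m} : Sub M Γ Γ
  | snoc {m : M.Mode} {Γ Δ Ξ : SCtx M m} (σ : Sub M Δ Ξ) (τ : ASub M Γ Δ) : Sub M Γ Ξ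

/-- Mixed sequences of atomic renamings and atomic substitutions. -/
inductive Mix (M : ModeTheory) : ∀ {m : M.Mode}, SCtx M m → SCtx M m → Type where
  | id {m : M.Mode} {Γ : SCtx M m} : Mix M Γ Γ
  | snocR {m : M.Mode} {Γ Δ Ξ : SCtx M m} (σ : Mix M Δ Ξ) (τ : ARen M Γ Δ) : Mix M Γ Ξ
  | snocS {m : M.Mode} {Γ Δ Ξ : SCtx M m} (σ : Mix M Δ Ξ) (τ : ASub M Γ Δ) : Mix M Γ Ξ

/-- Action of a regular renaming on an expression. -/
def renExpr {m : M.Mode} {Ξ : SCtx M m} (t : Expr M Ξ) :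
    ∀ {Γ : SCtx M m}, Ren M Γ Ξ → Expr M Γ
  | _, .id => t
  | _, .snoc σ τ => arenExpr M (renExpr t σ) τ

/-- Action of a regular substitution on an expression. -/
def subExpr {m : M.Mode} {Ξ : SCtx M m} (t : Expr M Ξ) :
    ∀ {Γ : SCtx M m}, Sub M Γ Ξ → Expr M Γ
  | _, .id => t
  | _, .snoc σ τ => asubExpr M (subExpr t σ) τ

/-- Action of a mixed sequence on an expression. -/
def mixExpr {m : M.Mode} {Ξ : SCtx M m} (t : Expr M Ξ) :
    ∀ {Γ : SCtx M m}, Mix M Γ Ξ → Expr M Γ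
  | _, .id => t
  | _, .snocR σ τ => arenExpr M (mixExpr t σ) τ
  | _, .snocS σ τ => asubExpr M (mixExpr t σ) τ

/-- Concatenation of regular substitutions (`concatSub σ τ` applies `σ` first). -/
def concatSub {m : M.Mode} {Δ Ξ : SCtx M m} (σ : Sub M Δ Ξ) :
    ∀ {Γ : SCtx M m}, Sub M Γ Δ → Sub M Γ Ξ
  | _, .id => σ
  | _, .snoc τ a => .snoc (concatSub σ τ) a

/-- Componentwise lifting of a regular renaming. -/
def liftRen {m k : M.Mode} (μ : M.Hom k m) :
    ∀ {Γ Δ : SCtx M m}, Ren M Γ Δ → Ren M (SCtx.ext Γ μ) (SCtx.ext Δ μ)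
  | _, _, .id => .id
  | _, _, .snoc σ τ => .snoc (liftRen μ σ) (liftA M τ μ)

/-- Componentwise lifting of a regular substitution. -/
def liftSub {m k : M.Mode} (μ : M.Hom k m) :
    ∀ {Γ Δ : SCtx M m}, Sub M Γ Δ → Sub M (SCtx.ext Γ μ) (SCtx.ext Δ μ)
  | _, _, .id => .id
  | _, _, .snoc σ τ => .snoc (liftSub μ σ) (liftS M τ μ)

/-- Componentwise lifting of a mixed sequence. -/
def liftMix {m k : M.Mode} (μ : M.Hom k m) :
    ∀ {Γ Δ : SCtx M m}, Mix M Γ Δ → Mix M (SCtx.ext Γ μ) (SCtx.ext Δ μ)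
  | _, _, .id => .id
  | _, _, .snocR σ τ => .snocR (liftMix μ σ) (liftA M τ μ)
  | _, _, .snocS σ τ => .snocS (liftMix μ σ) (liftS M τ μ)

/-- Componentwise locking of a regular renaming. -/
def lockRen {m n : M.Mode} (μ : M.Hom m n) :
    ∀ {Γ Δ : SCtx M n}, Ren M Γ Δ → Ren M (SCtx.lock Γ μ) (SCtx.lock Δ μ)
  | _, _, .id => .id
  | _, _, .snoc σ τ => .snoc (lockRen μ σ) (ARen.lock τ μ)

/-- Componentwise locking of a regular substitution. -/
def lockSub {m n : M.Mode} (μ : M.Hom m n) :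
    ∀ {Γ Δ : SCtx M n}, Sub M Γ Δ → Sub M (SCtx.lock Γ μ) (SCtx.lock Δ μ)
  | _, _, .id => .id
  | _, _, .snoc σ τ => .snoc (lockSub μ σ) (ASub.lock τ μ)

/-- Componentwise locking of a mixed sequence. -/
def lockMix {m n : M.Mode} (μ : M.Hom m n) :
    ∀ {Γ Δ : SCtx M n}, Mix M Γ Δ → Mix M (SCtx.lock Γ μ) (SCtx.lock Δ μ)
  | _, _, .id => .id
  | _, _, .snocR σ τ => .snocR (lockMix μ σ) (ARen.lock τ μ)
  | _, _, .snocS σ τ => .snocS (lockMix μ σ) (ASub.lock τ μ)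

/-- Locking a regular substitution by all locks of a lock telescope. -/
def lockTeleSub {m : M.Mode} {Γ Δ : SCtx M m} (σ : Sub M Γ Δ) :
    ∀ {n : M.Mode} (Λ : LockTele M n m), Sub M (appL M Γ Λ) (appL M Δ Λ)
  | _, .nil => σ
  | _, .cons ρ Λ => lockTeleSub (lockSub M ρ σ) Λ

/-- Locking a mixed sequence by all locks of a lock telescope. -/
def lockTeleMix {m : M.Mode} {Γ Δ : SCtx M m} (σ : Mix M Γ Δ) :
    ∀ {n : M.Mode} (Λ : LockTele M n m), Mix M (appL M Γ Λ) (appL M Δ Λ)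
  | _, .nil => σ
  | _, .cons ρ Λ => lockTeleMix (lockMix M ρ σ) Λ

/-- Scoping telescopes from inner mode `m` to outer mode `n`
(built from the inner end, as in the paper). -/
inductive Tele (M : ModeTheory) : M.Mode → M.Mode → Type where
  | nil {m : M.Mode} : Tele M m m
  | ext {m n k : M.Mode} (Φ : Tele M m n) (μ : M.Hom k m) : Tele M m n
  | lock {m n k : M.Mode} (Φ : Tele M m n) (μ : M.Hom k m) : Tele M k n

/-- Appending a scoping telescope to a scoping context (auxiliary argument order). -/
def appT' : ∀ {m n : M.Mode}, Tele M m n → SCtx M n → SCtx M m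
  | _, _, .nil, Γ => Γ
  | _, _, .ext Φ μ, Γ => SCtx.ext (appT' Φ Γ) μ
  | _, _, .lock Φ μ, Γ => SCtx.lock (appT' Φ Γ) μ

/-- Appending a scoping telescope to a scoping context. -/
abbrev appT {n m : M.Mode} (Γ : SCtx M n) (Φ : Tele M m n) : SCtx M m := appT' M Φ Γ

/-- Applying a scoping telescope to an atomic renaming. -/
def teleARen {m : M.Mode} {Γ Δ : SCtx M m} (σ : ARen M Γ Δ) :
    ∀ {n : M.Mode} (Φ : Tele M n m), ARen M (appT M Γ Φ) (appT M Δ Φ)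
  | _, .nil => σ
  | _, .ext Φ μ => liftA M (teleARen σ Φ) μ
  | _, .lock Φ μ => ARen.lock (teleARen σ Φ) μ

/-- Applying a scoping telescope to an atomic substitution. -/
def teleASub {m : M.Mode} {Γ Δ : SCtx M m} (σ : ASub M Γ Δ) :
    ∀ {n : M.Mode} (Φ : Tele M n m), ASub M (appT M Γ Φ) (appT M Δ Φ)
  | _, .nil => σ
  | _, .ext Φ μ => liftS M (teleASub σ Φ) μ
  | _, .lock Φ μ => ASub.lock (teleASub σ Φ) μ

/-- Applying a scoping telescope to a regular substitution. -/
def teleSub {m : M.Mode} {Γ Δ : SCtx M m} (σ : Sub M Γ Δ) :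
    ∀ {n : M.Mode} (Φ : Tele M n m), Sub M (appT M Γ Φ) (appT M Δ Φ)
  | _, .nil => σ
  | _, .ext Φ μ => liftSub M μ (teleSub σ Φ)
  | _, .lock Φ μ => lockSub M μ (teleSub σ Φ)

/-- Applying a scoping telescope to a mixed sequence. -/
def teleMix {m : M.Mode} {Γ Δ : SCtx M m} (σ : Mix M Γ Δ) :
    ∀ {n : M.Mode} (Φ : Tele M n m), Mix M (appT M Γ Φ) (appT M Δ Φ)
  | _, .nil => σ
  | _, .ext Φ μ => liftMix M μ (teleMix σ Φ)
  | _, .lock Φ μ => lockMix M μ (teleMix σ Φ)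

/-- Observational equivalence of regular SFMTT substitutions. -/
def ObsEq {m : M.Mode} {Γ Δ : SCtx M m} (σ τ : Sub M Γ Δ) : Prop :=
  ∀ (t : Expr M Δ), subExpr M t σ = subExpr M t τ


mutual
/-- WSMTT expressions (with explicit substitutions). -/
inductive WExpr (M : ModeTheory) : ∀ {m : M.Mode}, SCtx M m → Type where
  | vzero {m n : M.Mode} {Γ : SCtx M n} (μ : M.Hom m n) :
      WExpr M (SCtx.lock (SCtx.ext Γ μ) μ)
  | sub {m : M.Mode} {Δ : SCtx M m} (t : WExpr M Δ) {Γ : SCtx M m}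
      (σ : WSub M Γ Δ) : WExpr M Γ
  | bool {m : M.Mode} {Γ : SCtx M m} : WExpr M Γ
  | tt {m : M.Mode} {Γ : SCtx M m} : WExpr M Γ
  | ff {m : M.Mode} {Γ : SCtx M m} : WExpr M Γ
  | ifte {m : M.Mode} {Γ : SCtx M m} (A : WExpr M (SCtx.ext Γ (M.id m)))
      (s t t' : WExpr M Γ) : WExpr M Γ
  | arrow {m n : M.Mode} {Γ : SCtx M n} (μ : M.Hom m n)
      (A : WExpr M (SCtx.lock Γ μ)) (B : WExpr M (SCtx.ext Γ μ)) : WExpr M Γ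
  | lam {m n : M.Mode} {Γ : SCtx M n} (μ : M.Hom m n)
      (t : WExpr M (SCtx.ext Γ μ)) : WExpr M Γ
  | app {m n : M.Mode} {Γ : SCtx M n} (μ : M.Hom m n)
      (f : WExpr M Γ) (t : WExpr M (SCtx.lock Γ μ)) : WExpr M Γ
  | modTy {m n : M.Mode} {Γ : SCtx M n} (μ : M.Hom m n)
      (A : WExpr M (SCtx.lock Γ μ)) : WExpr M Γ
  | modTm {m n : M.Mode} {Γ : SCtx M n} (μ : M.Hom m n)
      (t : WExpr M (SCtx.lock Γ μ)) : WExpr M Γ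
  | letmod {m n o : M.Mode} {Γ : SCtx M o} (μ : M.Hom m n) (ν : M.Hom n o)
      (A : WExpr M (SCtx.lock (SCtx.lock Γ ν) μ)) (B : WExpr M (SCtx.ext Γ ν))
      (t : WExpr M (SCtx.lock Γ ν)) (s : WExpr M (SCtx.ext Γ (M.comp μ ν))) : WExpr M Γ

/-- WSMTT explicit substitutions. -/
inductive WSub (M : ModeTheory) : ∀ {m : M.Mode}, SCtx M m → SCtx M m → Type where
  | done {m : M.Mode} {Γ : SCtx M m} : WSub M Γ SCtx.empty
  | id {m : M.Mode} {Γ : SCtx M m} : WSub M Γ Γ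
  | wk {m k : M.Mode} {Γ : SCtx M m} (μ : M.Hom k m) : WSub M (SCtx.ext Γ μ) Γ
  | comp {m : M.Mode} {Γ Δ Ξ : SCtx M m} (σ : WSub M Δ Ξ) (τ : WSub M Γ Δ) :
      WSub M Γ Ξ
  | lock {m n : M.Mode} {Γ Δ : SCtx M n} (σ : WSub M Γ Δ) (μ : M.Hom m n) :
      WSub M (SCtx.lock Γ μ) (SCtx.lock Δ μ)
  | key {m n : M.Mode} (Γ : SCtx M m) (Θ Ψ : LockTele M n m)
      (α : M.Cell (locks M Θ) (locks M Ψ)) : WSub M (appL M Γ Ψ) (appL M Γ Θ)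
  | ext {m n : M.Mode} {Γ Δ : SCtx M n} (σ : WSub M Γ Δ) {μ : M.Hom m n}
      (t : WExpr M (SCtx.lock Γ μ)) : WSub M Γ (SCtx.ext Δ μ)
end

/-- Cast a WSMTT substitution along equalities of scoping contexts. -/
def castW {m : M.Mode} {Γ Γ' Δ Δ' : SCtx M m} (h1 : Γ = Γ') (h2 : Δ = Δ')
    (σ : WSub M Γ Δ) : WSub M Γ' Δ' := h1 ▸ h2 ▸ σ

/-- The WSMTT lifting `σ⁺ := (σ ∘ π).v0`. -/
def wlift {m k : M.Mode} {Γ Δ : SCtx M m} (σ : WSub M Γ Δ) (μ : M.Hom k m) :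
    WSub M (SCtx.ext Γ μ) (SCtx.ext Δ μ) :=
  WSub.ext (WSub.comp σ (WSub.wk μ)) (WExpr.vzero μ)

/-- Locking a WSMTT substitution by all locks of a lock telescope. -/
def lockTeleW {m : M.Mode} {Γ Δ : SCtx M m} (σ : WSub M Γ Δ) :
    ∀ {n : M.Mode} (Λ : LockTele M n m), WSub M (appL M Γ Λ) (appL M Δ Λ)
  | _, .nil => σ
  | _, .cons ρ Λ => lockTeleW (WSub.lock σ ρ) Λ

mutual
/-- σ-equivalence of WSMTT expressions. -/
inductive EqE (M : ModeTheory) : ∀ {m : M.Mode} {Γ : SCtx M m},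
    WExpr M Γ → WExpr M Γ → Prop where
  | refl {m : M.Mode} {Γ : SCtx M m} (t : WExpr M Γ) : EqE M t t
  | symm {m : M.Mode} {Γ : SCtx M m} {t s : WExpr M Γ} : EqE M t s → EqE M s t
  | trans {m : M.Mode} {Γ : SCtx M m} {t s u : WExpr M Γ} :
      EqE M t s → EqE M s u → EqE M t u
  | congSub {m : M.Mode} {Γ Δ : SCtx M m} {t₁ t₂ : WExpr M Δ} {σ₁ σ₂ : WSub M Γ Δ} :
      EqE M t₁ t₂ → EqS M σ₁ σ₂ → EqE M (WExpr.sub t₁ σ₁) (WExpr.sub t₂ σ₂)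
  | congIfte {m : M.Mode} {Γ : SCtx M m} {A₁ A₂ : WExpr M (SCtx.ext Γ (M.id m))}
      {s₁ s₂ t₁ t₂ u₁ u₂ : WExpr M Γ} :
      EqE M A₁ A₂ → EqE M s₁ s₂ → EqE M t₁ t₂ → EqE M u₁ u₂ →
      EqE M (WExpr.ifte A₁ s₁ t₁ u₁) (WExpr.ifte A₂ s₂ t₂ u₂)
  | congArrow {m n : M.Mode} {Γ : SCtx M n} (μ : M.Hom m n)
      {A₁ A₂ : WExpr M (SCtx.lock Γ μ)} {B₁ B₂ : WExpr M (SCtx.ext Γ μ)} :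
      EqE M A₁ A₂ → EqE M B₁ B₂ → EqE M (WExpr.arrow μ A₁ B₁) (WExpr.arrow μ A₂ B₂)
  | congLam {m n : M.Mode} {Γ : SCtx M n} (μ : M.Hom m n)
      {t₁ t₂ : WExpr M (SCtx.ext Γ μ)} :
      EqE M t₁ t₂ → EqE M (WExpr.lam μ t₁) (WExpr.lam μ t₂)
  | congApp {m n : M.Mode} {Γ : SCtx M n} (μ : M.Hom m n) {f₁ f₂ : WExpr M Γ}
      {t₁ t₂ : WExpr M (SCtx.lock Γ μ)} :
      EqE M f₁ f₂ → EqE M t₁ t₂ → EqE M (WExpr.app μ f₁ t₁) (WExpr.app μ f₂ t₂)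
  | congModTy {m n : M.Mode} {Γ : SCtx M n} (μ : M.Hom m n)
      {A₁ A₂ : WExpr M (SCtx.lock Γ μ)} :
      EqE M A₁ A₂ → EqE M (WExpr.modTy μ A₁) (WExpr.modTy μ A₂)
  | congModTm {m n : M.Mode} {Γ : SCtx M n} (μ : M.Hom m n)
      {t₁ t₂ : WExpr M (SCtx.lock Γ μ)} :
      EqE M t₁ t₂ → EqE M (WExpr.modTm μ t₁) (WExpr.modTm μ t₂)
  | congLetmod {m n o : M.Mode} {Γ : SCtx M o} (μ : M.Hom m n) (ν : M.Hom n o)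
      {A₁ A₂ : WExpr M (SCtx.lock (SCtx.lock Γ ν) μ)} {B₁ B₂ : WExpr M (SCtx.ext Γ ν)}
      {t₁ t₂ : WExpr M (SCtx.lock Γ ν)} {s₁ s₂ : WExpr M (SCtx.ext Γ (M.comp μ ν))} :
      EqE M A₁ A₂ → EqE M B₁ B₂ → EqE M t₁ t₂ → EqE M s₁ s₂ →
      EqE M (WExpr.letmod μ ν A₁ B₁ t₁ s₁) (WExpr.letmod μ ν A₂ B₂ t₂ s₂)
  | subId {m : M.Mode} {Γ : SCtx M m} (t : WExpr M Γ) :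
      EqE M (WExpr.sub t WSub.id) t
  | subComp {m : M.Mode} {Γ Δ Ξ : SCtx M m} (t : WExpr M Ξ) (σ : WSub M Δ Ξ)
      (τ : WSub M Γ Δ) :
      EqE M (WExpr.sub t (WSub.comp σ τ)) (WExpr.sub (WExpr.sub t σ) τ)
  | boolSub {m : M.Mode} {Γ Δ : SCtx M m} (σ : WSub M Γ Δ) :
      EqE M (WExpr.sub WExpr.bool σ) WExpr.bool
  | ttSub {m : M.Mode} {Γ Δ : SCtx M m} (σ : WSub M Γ Δ) :
      EqE M (WExpr.sub WExpr.tt σ) WExpr.tt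
  | ffSub {m : M.Mode} {Γ Δ : SCtx M m} (σ : WSub M Γ Δ) :
      EqE M (WExpr.sub WExpr.ff σ) WExpr.ff
  | ifteSub {m : M.Mode} {Γ Δ : SCtx M m} (A : WExpr M (SCtx.ext Δ (M.id m)))
      (s t t' : WExpr M Δ) (σ : WSub M Γ Δ) :
      EqE M (WExpr.sub (WExpr.ifte A s t t') σ)
        (WExpr.ifte (WExpr.sub A (wlift M σ (M.id m))) (WExpr.sub s σ)
          (WExpr.sub t σ) (WExpr.sub t' σ))
  | arrowSub {m n : M.Mode} {Γ Δ : SCtx M n} (μ : M.Hom m n)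
      (A : WExpr M (SCtx.lock Δ μ)) (B : WExpr M (SCtx.ext Δ μ)) (σ : WSub M Γ Δ) :
      EqE M (WExpr.sub (WExpr.arrow μ A B) σ)
        (WExpr.arrow μ (WExpr.sub A (WSub.lock σ μ)) (WExpr.sub B (wlift M σ μ)))
  | lamSub {m n : M.Mode} {Γ Δ : SCtx M n} (μ : M.Hom m n)
      (t : WExpr M (SCtx.ext Δ μ)) (σ : WSub M Γ Δ) :
      EqE M (WExpr.sub (WExpr.lam μ t) σ) (WExpr.lam μ (WExpr.sub t (wlift M σ μ)))
  | appSub {m n : M.Mode} {Γ Δ : SCtx M n} (μ : M.Hom m n) (f : WExpr M Δ)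
      (t : WExpr M (SCtx.lock Δ μ)) (σ : WSub M Γ Δ) :
      EqE M (WExpr.sub (WExpr.app μ f t) σ)
        (WExpr.app μ (WExpr.sub f σ) (WExpr.sub t (WSub.lock σ μ)))
  | modTySub {m n : M.Mode} {Γ Δ : SCtx M n} (μ : M.Hom m n)
      (A : WExpr M (SCtx.lock Δ μ)) (σ : WSub M Γ Δ) :
      EqE M (WExpr.sub (WExpr.modTy μ A) σ) (WExpr.modTy μ (WExpr.sub A (WSub.lock σ μ)))
  | modTmSub {m n : M.Mode} {Γ Δ : SCtx M n} (μ : M.Hom m n)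
      (t : WExpr M (SCtx.lock Δ μ)) (σ : WSub M Γ Δ) :
      EqE M (WExpr.sub (WExpr.modTm μ t) σ) (WExpr.modTm μ (WExpr.sub t (WSub.lock σ μ)))
  | letmodSub {m n o : M.Mode} {Γ Δ : SCtx M o} (μ : M.Hom m n) (ν : M.Hom n o)
      (A : WExpr M (SCtx.lock (SCtx.lock Δ ν) μ)) (B : WExpr M (SCtx.ext Δ ν))
      (t : WExpr M (SCtx.lock Δ ν)) (s : WExpr M (SCtx.ext Δ (M.comp μ ν)))
      (σ : WSub M Γ Δ) :
      EqE M (WExpr.sub (WExpr.letmod μ ν A B t s) σ)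
        (WExpr.letmod μ ν (WExpr.sub A (WSub.lock (WSub.lock σ ν) μ))
          (WExpr.sub B (wlift M σ ν)) (WExpr.sub t (WSub.lock σ ν))
          (WExpr.sub s (wlift M σ (M.comp μ ν))))
  | extVar {m n : M.Mode} {Γ Δ : SCtx M n} (σ : WSub M Γ Δ) {μ : M.Hom m n}
      (t : WExpr M (SCtx.lock Γ μ)) :
      EqE M (WExpr.sub (WExpr.vzero μ) (WSub.lock (WSub.ext σ t) μ)) t

/-- σ-equivalence of WSMTT substitutions. -/
inductive EqS (M : ModeTheory) : ∀ {m : M.Mode} {Γ Δ : SCtx M m},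
    WSub M Γ Δ → WSub M Γ Δ → Prop where
  | refl {m : M.Mode} {Γ Δ : SCtx M m} (σ : WSub M Γ Δ) : EqS M σ σ
  | symm {m : M.Mode} {Γ Δ : SCtx M m} {σ τ : WSub M Γ Δ} : EqS M σ τ → EqS M τ σ
  | trans {m : M.Mode} {Γ Δ : SCtx M m} {σ τ ρ : WSub M Γ Δ} :
      EqS M σ τ → EqS M τ ρ → EqS M σ ρ
  | congComp {m : M.Mode} {Γ Δ Ξ : SCtx M m} {σ₁ σ₂ : WSub M Δ Ξ}
      {τ₁ τ₂ : WSub M Γ Δ} : EqS M σ₁ σ₂ → EqS M τ₁ τ₂ →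
      EqS M (WSub.comp σ₁ τ₁) (WSub.comp σ₂ τ₂)
  | congLock {m n : M.Mode} {Γ Δ : SCtx M n} {σ₁ σ₂ : WSub M Γ Δ} (μ : M.Hom m n) :
      EqS M σ₁ σ₂ → EqS M (WSub.lock σ₁ μ) (WSub.lock σ₂ μ)
  | congExt {m n : M.Mode} {Γ Δ : SCtx M n} {σ₁ σ₂ : WSub M Γ Δ} {μ : M.Hom m n}
      {t₁ t₂ : WExpr M (SCtx.lock Γ μ)} : EqS M σ₁ σ₂ → EqE M t₁ t₂ →
      EqS M (WSub.ext σ₁ t₁) (WSub.ext σ₂ t₂)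
  | idLeft {m : M.Mode} {Γ Δ : SCtx M m} (σ : WSub M Γ Δ) :
      EqS M (WSub.comp WSub.id σ) σ
  | idRight {m : M.Mode} {Γ Δ : SCtx M m} (σ : WSub M Γ Δ) :
      EqS M (WSub.comp σ WSub.id) σ
  | compAssoc {m : M.Mode} {Γ Δ Ξ Ω : SCtx M m} (σ : WSub M Ξ Ω) (τ : WSub M Δ Ξ)
      (ρ : WSub M Γ Δ) :
      EqS M (WSub.comp (WSub.comp σ τ) ρ) (WSub.comp σ (WSub.comp τ ρ))
  | emptyUnique {m : M.Mode} {Γ : SCtx M m} (σ : WSub M Γ SCtx.empty) :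
      EqS M σ WSub.done
  | extWeaken {m n : M.Mode} {Γ Δ : SCtx M n} (σ : WSub M Γ Δ) {μ : M.Hom m n}
      (t : WExpr M (SCtx.lock Γ μ)) :
      EqS M (WSub.comp (WSub.wk μ) (WSub.ext σ t)) σ
  | extEta {m n : M.Mode} {Γ Δ : SCtx M n} {μ : M.Hom m n}
      (σ : WSub M Γ (SCtx.ext Δ μ)) :
      EqS M σ (WSub.ext (WSub.comp (WSub.wk μ) σ)
        (WExpr.sub (WExpr.vzero μ) (WSub.lock σ μ)))
  | lockId {m n : M.Mode} {Γ : SCtx M n} (μ : M.Hom m n) :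
      EqS M (WSub.lock (WSub.id (Γ := Γ)) μ) WSub.id
  | lockComp {m n : M.Mode} {Γ Δ Ξ : SCtx M n} (σ : WSub M Δ Ξ) (τ : WSub M Γ Δ)
      (μ : M.Hom m n) :
      EqS M (WSub.lock (WSub.comp σ τ) μ) (WSub.comp (WSub.lock σ μ) (WSub.lock τ μ))
  | keyNatural {m n : M.Mode} {Γ Δ : SCtx M m} (Λ Θ : LockTele M n m)
      (α : M.Cell (locks M Λ) (locks M Θ)) (σ : WSub M Γ Δ) :
      EqS M (WSub.comp (WSub.key Δ Λ Θ α) (lockTeleW M σ Θ))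
        (WSub.comp (lockTeleW M σ Λ) (WSub.key Γ Λ Θ α))
  | keyUnit {m n : M.Mode} (Γ : SCtx M m) (Λ : LockTele M n m) :
      EqS M (WSub.key Γ Λ Λ (M.cid (locks M Λ))) WSub.id
  | keyVert {m n : M.Mode} (Γ : SCtx M m) (Λ Θ Ψ : LockTele M n m)
      (α : M.Cell (locks M Λ) (locks M Θ)) (β : M.Cell (locks M Θ) (locks M Ψ)) :
      EqS M (WSub.key Γ Λ Ψ (M.vcomp α β))
        (WSub.comp (WSub.key Γ Λ Θ α) (WSub.key Γ Θ Ψ β))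
  | keyHor {m n o : M.Mode} (Γ : SCtx M m) (Λ₁ Λ₂ : LockTele M n m)
      (Θ₁ Θ₂ : LockTele M o n) (β : M.Cell (locks M Λ₁) (locks M Λ₂))
      (α : M.Cell (locks M Θ₁) (locks M Θ₂)) :
      EqS M (WSub.key Γ (appLT M Λ₁ Θ₁) (appLT M Λ₂ Θ₂)
          (castCell M (locks_append M Λ₁ Θ₁).symm (locks_append M Λ₂ Θ₂).symm
            (M.hcomp α β)))
        (castW M (appL_append M Γ Λ₂ Θ₂) (appL_append M Γ Λ₁ Θ₁)
          (WSub.comp (lockTeleW M (WSub.key Γ Λ₁ Λ₂ β) Θ₁)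
            (WSub.key (appL M Γ Λ₂) Θ₁ Θ₂ α)))
end


mutual
/-- Translation of WSMTT expressions to SFMTT expressions. -/
def trE : ∀ {m : M.Mode} {Γ : SCtx M m}, WExpr M Γ → Expr M Γ
  | _, _, .vzero μ => Expr.var (vzeroLift M μ)
  | _, _, .sub t σ => subExpr M (trE t) (trS σ)
  | _, _, .bool => .bool
  | _, _, .tt => .tt
  | _, _, .ff => .ff
  | _, _, .ifte A s t t' => .ifte (trE A) (trE s) (trE t) (trE t')
  | _, _, .arrow μ A B => .arrow μ (trE A) (trE B)
  | _, _, .lam μ t => .lam μ (trE t)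
  | _, _, .app μ f t => .app μ (trE f) (trE t)
  | _, _, .modTy μ A => .modTy μ (trE A)
  | _, _, .modTm μ t => .modTm μ (trE t)
  | _, _, .letmod μ ν A B t s => .letmod μ ν (trE A) (trE B) (trE t) (trE s)

/-- Translation of WSMTT substitutions to regular SFMTT substitutions. -/
def trS : ∀ {m : M.Mode} {Γ Δ : SCtx M m}, WSub M Γ Δ → Sub M Γ Δ
  | _, _, _, .done => Sub.snoc Sub.id ASub.done
  | _, _, _, .id => Sub.id
  | _, _, _, .wk μ => Sub.snoc Sub.id (ASub.wk ASub.id μ)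
  | _, _, _, .comp σ τ => concatSub M (trS σ) (trS τ)
  | _, _, _, .lock σ μ => lockSub M μ (trS σ)
  | _, _, _, .key Γ Θ Ψ α => Sub.snoc Sub.id (ASub.key Γ Θ Ψ α)
  | _, _, _, @WSub.ext _ _ _ _ _ σ μ t =>
      Sub.snoc (liftSub M μ (trS σ)) (ASub.ext ASub.id (trE t))
end

/-- Embedding of SFMTT variables into WSMTT expressions. -/
def embVar : ∀ {n : M.Mode} (Γ : SCtx M n) {m : M.Mode} (Θ : LockTele M m n),
    VarIn M Γ Θ → WExpr M (appL M Γ Θ)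
  | _, .empty, _, _, v => PEmpty.elim v
  | _, .lock Γ ρ, _, Θ, v => embVar Γ (.cons ρ Θ) v
  | _, .ext Γ μ, _, Θ, v =>
      match v with
      | Sum.inl ⟨h, α⟩ =>
          (by cases h; exact WExpr.sub (WExpr.vzero μ)
                (WSub.key (SCtx.ext Γ μ) (LockTele.cons μ LockTele.nil) Θ
                  (castCell M (locks_cons_nil M μ).symm rfl α)))
      | Sum.inr w => WExpr.sub (embVar Γ Θ w) (lockTeleW M (WSub.wk μ) Θ)

/-- Embedding of SFMTT expressions into WSMTT expressions. -/
def embE : ∀ {m : M.Mode} {Γ : SCtx M m}, Expr M Γ → WExpr M Γ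
  | _, _, .var v => embVar M _ LockTele.nil v
  | _, _, .bool => .bool
  | _, _, .tt => .tt
  | _, _, .ff => .ff
  | _, _, .ifte A s t t' => .ifte (embE A) (embE s) (embE t) (embE t')
  | _, _, .arrow μ A B => .arrow μ (embE A) (embE B)
  | _, _, .lam μ t => .lam μ (embE t)
  | _, _, .app μ f t => .app μ (embE f) (embE t)
  | _, _, .modTy μ A => .modTy μ (embE A)
  | _, _, .modTm μ t => .modTm μ (embE t)
  | _, _, .letmod μ ν A B t s => .letmod μ ν (embE A) (embE B) (embE t) (embE s)

/-- Embedding of atomic SFMTT renamings into WSMTT substitutions. -/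
def embARen : ∀ {m : M.Mode} {Γ Δ : SCtx M m}, ARen M Γ Δ → WSub M Γ Δ
  | _, _, _, .done => WSub.done
  | _, _, _, .id => WSub.id
  | _, _, _, .wk σ μ => WSub.comp (embARen σ) (WSub.wk μ)
  | _, _, _, .lock σ μ => WSub.lock (embARen σ) μ
  | _, _, _, .key Γ Θ Ψ α => WSub.key Γ Θ Ψ α
  | _, _, _, @ARen.ext _ _ _ _ _ σ μ v => WSub.ext (embARen σ) (embVar M _ _ v)

/-- Embedding of atomic SFMTT substitutions into WSMTT substitutions. -/
def embASub : ∀ {m : M.Mode} {Γ Δ : SCtx M m}, ASub M Γ Δ → WSub M Γ Δ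
  | _, _, _, .done => WSub.done
  | _, _, _, .id => WSub.id
  | _, _, _, .wk σ μ => WSub.comp (embASub σ) (WSub.wk μ)
  | _, _, _, .lock σ μ => WSub.lock (embASub σ) μ
  | _, _, _, .key Γ Θ Ψ α => WSub.key Γ Θ Ψ α
  | _, _, _, .ext σ t => WSub.ext (embASub σ) (embE M t)

/-- Embedding of regular SFMTT renamings into WSMTT substitutions. -/
def embRen : ∀ {m : M.Mode} {Γ Δ : SCtx M m}, Ren M Γ Δ → WSub M Γ Δ
  | _, _, _, .id => WSub.id
  | _, _, _, .snoc σ τ => WSub.comp (embRen σ) (embARen M τ)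

/-- Embedding of regular SFMTT substitutions into WSMTT substitutions. -/
def embSub : ∀ {m : M.Mode} {Γ Δ : SCtx M m}, Sub M Γ Δ → WSub M Γ Δ
  | _, _, _, .id => WSub.id
  | _, _, _, .snoc σ τ => WSub.comp (embSub σ) (embASub M τ)


/-- Cast an SFMTT expression along an equality of scoping contexts. -/
def castE {m : M.Mode} {Γ Γ' : SCtx M m} (h : Γ = Γ') (t : Expr M Γ) : Expr M Γ' :=
  h ▸ t



/-! ### Auxiliary machinery for `key_hcomp` -/

theorem castCell_heq {m n : M.Mode} {μ μ' ν ν' : M.Hom m n}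
    (h1 : μ = μ') (h2 : ν = ν') (α : M.Cell μ ν) :
    HEq (castCell M h1 h2 α) α := by subst h1; subst h2; rfl

theorem cid_heq {m n : M.Mode} {μ ν : M.Hom m n} (h : μ = ν) :
    HEq (M.cid μ) (M.cid ν) := by subst h; rfl

theorem vcomp_heq {m n : M.Mode} {μ ν ρ μ' ν' ρ' : M.Hom m n}
    (h1 : μ = μ') (h2 : ν = ν') (h3 : ρ = ρ')
    {x : M.Cell μ ν} {x' : M.Cell μ' ν'} {y : M.Cell ν ρ} {y' : M.Cell ν' ρ'}
    (hx : HEq x x') (hy : HEq y y') :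
    HEq (M.vcomp x y) (M.vcomp x' y') := by
  subst h1; subst h2; subst h3; cases hx; cases hy; rfl

theorem hcomp_heq2 {m n o : M.Mode} {μ μ' ν ν' : M.Hom m n} {ρ ρ' σ σ' : M.Hom n o}
    (h1 : μ = μ') (h2 : ν = ν') (h3 : ρ = ρ') (h4 : σ = σ')
    {x : M.Cell μ ν} {x' : M.Cell μ' ν'} {y : M.Cell ρ σ} {y' : M.Cell ρ' σ'}
    (hx : HEq x x') (hy : HEq y y') :
    HEq (M.hcomp x y) (M.hcomp x' y') := by
  subst h1; subst h2; subst h3; subst h4; cases hx; cases hy; rfl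

theorem vcomp_cast_cid {m n : M.Mode} {μ ν ρ : M.Hom m n} (e : ν = μ) (β : M.Cell μ ρ) :
    M.vcomp (castCell M rfl e.symm (M.cid μ)) (castCell M e.symm rfl β) = β := by
  subst e; exact M.cid_vcomp β

theorem cell_core1 {o n m p : M.Mode} {a₁ a₂ : M.Hom o n} {b₁ b₂ : M.Hom n m}
    (a : M.Cell a₁ a₂) (b : M.Cell b₁ b₂) (x : M.Hom m p) :
    M.hcomp (M.hcomp a b) (M.cid x) =
      M.vcomp (M.hcomp (M.hcomp (M.cid a₁) b) (M.cid x))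
        (castCell M (M.comp_assoc a₁ b₂ x).symm (M.comp_assoc a₂ b₂ x).symm
          (M.hcomp a (M.cid (M.comp b₂ x)))) := by
  have h1 : M.hcomp a b = M.vcomp (M.hcomp (M.cid a₁) b) (M.hcomp a (M.cid b₂)) := by
    have h := M.interchange (M.cid a₁) a b (M.cid b₂)
    rwa [M.cid_vcomp, M.vcomp_cid] at h
  have h2 : M.hcomp (M.hcomp a (M.cid b₂)) (M.cid x) =
      castCell M (M.comp_assoc a₁ b₂ x).symm (M.comp_assoc a₂ b₂ x).symm
        (M.hcomp a (M.cid (M.comp b₂ x))) := by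
    apply eq_of_heq
    refine (M.hcomp_assoc a (M.cid b₂) (M.cid x)).trans ?_
    rw [M.hcomp_cid]
    exact (castCell_heq M _ _ _).symm
  have h3 := M.interchange (M.hcomp (M.cid a₁) b) (M.hcomp a (M.cid b₂)) (M.cid x) (M.cid x)
  rw [M.cid_vcomp] at h3
  rw [h1, h3, h2]

theorem cell_core2 {o n m p : M.Mode} {a₁ a₂ : M.Hom o n} {b₁ b₂ : M.Hom n m}
    (a : M.Cell a₁ a₂) (b : M.Cell b₁ b₂) (x : M.Hom m p) :
    M.hcomp (M.hcomp a b) (M.cid x) =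
      M.vcomp
        (castCell M (M.comp_assoc a₁ b₁ x).symm (M.comp_assoc a₂ b₁ x).symm
          (M.hcomp a (M.cid (M.comp b₁ x))))
        (M.hcomp (M.hcomp (M.cid a₂) b) (M.cid x)) := by
  have h1 : M.hcomp a b = M.vcomp (M.hcomp a (M.cid b₁)) (M.hcomp (M.cid a₂) b) := by
    have h := M.interchange a (M.cid a₂) (M.cid b₁) b
    rwa [M.vcomp_cid, M.cid_vcomp] at h
  have h2 : M.hcomp (M.hcomp a (M.cid b₁)) (M.cid x) =
      castCell M (M.comp_assoc a₁ b₁ x).symm (M.comp_assoc a₂ b₁ x).symm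
        (M.hcomp a (M.cid (M.comp b₁ x))) := by
    apply eq_of_heq
    refine (M.hcomp_assoc a (M.cid b₁) (M.cid x)).trans ?_
    rw [M.hcomp_cid]
    exact (castCell_heq M _ _ _).symm
  have h3 := M.interchange (M.hcomp a (M.cid b₁)) (M.hcomp (M.cid a₂) b) (M.cid x) (M.cid x)
  rw [M.cid_vcomp] at h3
  rw [h1, h3, h2]


/-- Families of variable maps under all lock telescopes. -/
def Fam {m : M.Mode} (Γ Δ : SCtx M m) : Type :=
  ∀ (n : M.Mode) (Λ : LockTele M n m), VarIn M Δ Λ → VarIn M Γ Λ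

/-- The family of variable actions of an atomic renaming. -/
def famOf {m : M.Mode} {Γ Δ : SCtx M m} (σ : ARen M Γ Δ) : Fam M Γ Δ :=
  fun _ Λ v => arenVar M σ Λ v

/-- Lifting a family along a context extension. -/
def liftF {m k : M.Mode} {Γ Δ : SCtx M m} (f : Fam M Γ Δ) (μ : M.Hom k m) :
    Fam M (SCtx.ext Γ μ) (SCtx.ext Δ μ) := fun n Λ v =>
  match v with
  | Sum.inl p => Sum.inl p
  | Sum.inr v' => Sum.inr (f n Λ v')

/-- Locking a family. -/
def lockF {m k : M.Mode} {Γ Δ : SCtx M m} (f : Fam M Γ Δ) (μ : M.Hom k m) :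
    Fam M (SCtx.lock Γ μ) (SCtx.lock Δ μ) := fun n Λ v => f n (.cons μ Λ) v

/-- Composition of families. -/
def compF {m : M.Mode} {Γ Δ' Δ : SCtx M m} (f : Fam M Δ' Δ) (g : Fam M Γ Δ') :
    Fam M Γ Δ := fun n Λ v => g n Λ (f n Λ v)

/-- Action of a family on an expression, mirroring `arenExpr`. -/
def genExpr : ∀ {m : M.Mode} {Δ : SCtx M m}, Expr M Δ →
    ∀ {Γ : SCtx M m}, Fam M Γ Δ → Expr M Γ
  | _, _, .var v, _, f => .var (f _ LockTele.nil v)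
  | _, _, .bool, _, _ => .bool
  | _, _, .tt, _, _ => .tt
  | _, _, .ff, _, _ => .ff
  | _, _, .ifte A s t t', _, f =>
      .ifte (genExpr A (liftF M f (M.id _))) (genExpr s f) (genExpr t f) (genExpr t' f)
  | _, _, .arrow μ A B, _, f =>
      .arrow μ (genExpr A (lockF M f μ)) (genExpr B (liftF M f μ))
  | _, _, .lam μ t, _, f => .lam μ (genExpr t (liftF M f μ))
  | _, _, .app μ g t, _, f => .app μ (genExpr g f) (genExpr t (lockF M f μ))
  | _, _, .modTy μ A, _, f => .modTy μ (genExpr A (lockF M f μ))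
  | _, _, .modTm μ t, _, f => .modTm μ (genExpr t (lockF M f μ))
  | _, _, .letmod μ ν A B t s, _, f =>
      .letmod μ ν (genExpr A (lockF M (lockF M f ν) μ)) (genExpr B (liftF M f ν))
        (genExpr t (lockF M f ν)) (genExpr s (liftF M f (M.comp μ ν)))

theorem famOf_lock {m k : M.Mode} {Γ Δ : SCtx M m} (σ : ARen M Γ Δ) (μ : M.Hom k m) :
    famOf M (ARen.lock σ μ) = lockF M (famOf M σ) μ := rfl

theorem famOf_liftA {m k : M.Mode} {Γ Δ : SCtx M m} (σ : ARen M Γ Δ) (μ : M.Hom k m) :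
    famOf M (liftA M σ μ) = liftF M (famOf M σ) μ := by
  funext n Λ v
  cases v with
  | inr v' => rfl
  | inl p =>
    obtain ⟨h, β⟩ := p
    cases h
    show transf M (castCell M (locks_cons_nil M μ).symm rfl β) (SCtx.ext Γ μ)
      LockTele.nil (vzeroLift M μ) = VarIn.vz M β
    show VarIn.vz M (M.vcomp (castCell M rfl (locks_cons_nil M μ).symm (M.cid μ))
      (castCell M
        (locks_append M LockTele.nil (LockTele.cons μ LockTele.nil)).symm
        (locks_append M LockTele.nil Λ).symm
        (M.hcomp (castCell M (locks_cons_nil M μ).symm rfl β)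
          (M.cid (M.id m))))) = VarIn.vz M β
    have h2 : castCell M
        (locks_append M LockTele.nil (LockTele.cons μ LockTele.nil)).symm
        (locks_append M LockTele.nil Λ).symm
        (M.hcomp (castCell M (locks_cons_nil M μ).symm rfl β)
          (M.cid (M.id m))) =
        castCell M (locks_cons_nil M μ).symm rfl β :=
      eq_of_heq ((castCell_heq M _ _ _).trans (M.hcomp_id _))
    erw [h2]
    erw [vcomp_cast_cid]
    rfl
    exact locks_cons_nil M μ

theorem aren_gen : ∀ {m : M.Mode} {Δ : SCtx M m} (t : Expr M Δ) {Γ : SCtx M m}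
    (σ : ARen M Γ Δ), arenExpr M t σ = genExpr M t (famOf M σ)
  | _, _, .var v, _, σ => rfl
  | _, _, .bool, _, _ => rfl
  | _, _, .tt, _, _ => rfl
  | _, _, .ff, _, _ => rfl
  | _, _, .ifte A s t t', _, σ => by
      show Expr.ifte _ _ _ _ = Expr.ifte _ _ _ _
      rw [aren_gen A, aren_gen s, aren_gen t, aren_gen t', famOf_liftA]
  | _, _, .arrow μ A B, _, σ => by
      show Expr.arrow _ _ _ = Expr.arrow _ _ _
      rw [aren_gen A, aren_gen B, famOf_liftA, famOf_lock]
  | _, _, .lam μ t, _, σ => by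
      show Expr.lam _ _ = Expr.lam _ _
      rw [aren_gen t, famOf_liftA]
  | _, _, .app μ g t, _, σ => by
      show Expr.app _ _ _ = Expr.app _ _ _
      rw [aren_gen g, aren_gen t, famOf_lock]
  | _, _, .modTy μ A, _, σ => by
      show Expr.modTy _ _ = Expr.modTy _ _
      rw [aren_gen A, famOf_lock]
  | _, _, .modTm μ t, _, σ => by
      show Expr.modTm _ _ = Expr.modTm _ _
      rw [aren_gen t, famOf_lock]
  | _, _, .letmod μ ν A B t s, _, σ => by
      show Expr.letmod _ _ _ _ _ _ = Expr.letmod _ _ _ _ _ _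
      rw [aren_gen A, aren_gen B, aren_gen t, aren_gen s, famOf_liftA, famOf_liftA,
        famOf_lock, famOf_lock]

theorem liftF_comp {m k : M.Mode} {Γ Δ' Δ : SCtx M m} (f : Fam M Δ' Δ) (g : Fam M Γ Δ')
    (μ : M.Hom k m) :
    liftF M (compF M f g) μ = compF M (liftF M f μ) (liftF M g μ) := by
  funext n Λ v; cases v <;> rfl

theorem lockF_comp {m k : M.Mode} {Γ Δ' Δ : SCtx M m} (f : Fam M Δ' Δ) (g : Fam M Γ Δ')
    (μ : M.Hom k m) :
    lockF M (compF M f g) μ = compF M (lockF M f μ) (lockF M g μ) := rfl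

theorem gen_comp : ∀ {m : M.Mode} {Δ : SCtx M m} (t : Expr M Δ) {Δ' Γ : SCtx M m}
    (f : Fam M Δ' Δ) (g : Fam M Γ Δ'),
    genExpr M (genExpr M t f) g = genExpr M t (compF M f g)
  | _, _, .var v, _, _, f, g => rfl
  | _, _, .bool, _, _, _, _ => rfl
  | _, _, .tt, _, _, _, _ => rfl
  | _, _, .ff, _, _, _, _ => rfl
  | _, _, .ifte A s t t', _, _, f, g => by
      show Expr.ifte _ _ _ _ = Expr.ifte _ _ _ _
      rw [gen_comp A, gen_comp s, gen_comp t, gen_comp t', liftF_comp]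
  | _, _, .arrow μ A B, _, _, f, g => by
      show Expr.arrow _ _ _ = Expr.arrow _ _ _
      rw [gen_comp A, gen_comp B, liftF_comp, lockF_comp]
  | _, _, .lam μ t, _, _, f, g => by
      show Expr.lam _ _ = Expr.lam _ _
      rw [gen_comp t, liftF_comp]
  | _, _, .app μ h t, _, _, f, g => by
      show Expr.app _ _ _ = Expr.app _ _ _
      rw [gen_comp h, gen_comp t, lockF_comp]
  | _, _, .modTy μ A, _, _, f, g => by
      show Expr.modTy _ _ = Expr.modTy _ _
      rw [gen_comp A, lockF_comp]
  | _, _, .modTm μ t, _, _, f, g => by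
      show Expr.modTm _ _ = Expr.modTm _ _
      rw [gen_comp t, lockF_comp]
  | _, _, .letmod μ ν A B t s, _, _, f, g => by
      show Expr.letmod _ _ _ _ _ _ = Expr.letmod _ _ _ _ _ _
      rw [gen_comp A, gen_comp B, gen_comp t, gen_comp s, liftF_comp, liftF_comp,
        lockF_comp, lockF_comp]

theorem gen_cast {m : M.Mode} {Γ Γ' Δ Δ' : SCtx M m} (eΓ : Γ = Γ') (eΔ : Δ = Δ')
    (t : Expr M Δ) (f : Fam M Γ' Δ') :
    castE M eΓ.symm (genExpr M (castE M eΔ t) f) =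
      genExpr M t (fun n Λ v =>
        cast (congrArg (fun C => VarIn M C Λ) eΓ.symm)
          (f n Λ (cast (congrArg (fun C => VarIn M C Λ) eΔ) v))) := by
  subst eΓ; subst eΔ; rfl


theorem appLT_assoc : ∀ {i j k n : M.Mode} (X : LockTele M k n) (Y : LockTele M j k)
    (Z : LockTele M i j), appLT M (appLT M X Y) Z = appLT M X (appLT M Y Z)
  | _, _, _, _, .nil, _, _ => rfl
  | _, _, _, _, .cons ρ X, Y, Z => by
      show LockTele.cons ρ (appLT M (appLT M X Y) Z) =
        LockTele.cons ρ (appLT M X (appLT M Y Z))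
      rw [appLT_assoc X Y Z]

theorem transf_congr {n k : M.Mode} {Θ Θ' Ψ Ψ' : LockTele M n k}
    (eΘ : Θ = Θ') (eΨ : Ψ = Ψ')
    {γ : M.Cell (locks M Θ) (locks M Ψ)} {γ' : M.Cell (locks M Θ') (locks M Ψ')}
    (hγ : HEq γ γ') {l : M.Mode} (Γ : SCtx M l) (Ξ : LockTele M k l)
    {v : VarIn M Γ (appLT M Ξ Θ)} {v' : VarIn M Γ (appLT M Ξ Θ')} (hv : HEq v v') :
    HEq (transf M γ Γ Ξ v) (transf M γ' Γ Ξ v') := by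
  subst eΘ; subst eΨ; cases hγ; cases hv; rfl

theorem castVar_inr {m k n : M.Mode} {Γ : SCtx M m} (μ : M.Hom k m)
    {Λ Λ' : LockTele M n m} (e : Λ = Λ')
    (E : VarIn M (SCtx.ext Γ μ) Λ = VarIn M (SCtx.ext Γ μ) Λ') (w : VarIn M Γ Λ) :
    cast E (VarIn.sucv M w) = VarIn.sucv M (cast (congrArg (VarIn M Γ) e) w) := by
  subst e; rfl

theorem castVar_inl {m n : M.Mode} {Γ : SCtx M m} (μ : M.Hom n m)
    {Λ Λ' : LockTele M n m} (e : Λ = Λ')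
    (E : VarIn M (SCtx.ext Γ μ) Λ = VarIn M (SCtx.ext Γ μ) Λ')
    (c : M.Cell μ (locks M Λ)) :
    cast E (VarIn.vz M c) = VarIn.vz M (castCell M rfl (congrArg (locks M) e) c) := by
  subst e; rfl

theorem sucv_heq {m k n : M.Mode} {Γ : SCtx M m} (μ : M.Hom k m)
    {Λ Λ' : LockTele M n m} (e : Λ = Λ') {w : VarIn M Γ Λ} {w' : VarIn M Γ Λ'}
    (hw : HEq w w') :
    HEq (VarIn.sucv M w : VarIn M (SCtx.ext Γ μ) Λ)
      (VarIn.sucv M w' : VarIn M (SCtx.ext Γ μ) Λ') := by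
  subst e; cases hw; rfl

theorem vz_heq {m n : M.Mode} {Γ : SCtx M m} (μ : M.Hom n m)
    {Λ Λ' : LockTele M n m} (e : Λ = Λ')
    {c : M.Cell μ (locks M Λ)} {c' : M.Cell μ (locks M Λ')} (hc : HEq c c') :
    HEq (VarIn.vz M c : VarIn M (SCtx.ext Γ μ) Λ)
      (VarIn.vz M c' : VarIn M (SCtx.ext Γ μ) Λ') := by
  subst e; cases hc; rfl

theorem arenVar_lockTeleA : ∀ {k m : M.Mode} (Θ : LockTele M k m) {Γ Δ : SCtx M m}
    (σ : ARen M Γ Δ) {p : M.Mode} (Λ : LockTele M p k) (v : VarIn M (appL M Δ Θ) Λ),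
    arenVar M (lockTeleA M σ Θ) Λ v =
      cast (varIn_append M Λ Γ Θ).symm
        (arenVar M σ (appLT M Θ Λ) (cast (varIn_append M Λ Δ Θ) v))
  | _, _, .nil, Γ, Δ, σ, _, Λ, v => by
      simp only [lockTeleA]
      apply eq_of_heq
      have h1 : cast (varIn_append M Λ Δ LockTele.nil) v = v := eq_of_heq (cast_heq _ _)
      rw [h1]
      exact (cast_heq _ _).symm
  | _, _, .cons ρ Θ, Γ, Δ, σ, _, Λ, v => by
      simp only [lockTeleA]
      exact arenVar_lockTeleA Θ (ARen.lock σ ρ) Λ v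

theorem transf_appL {n k : M.Mode} {Θ Ψ : LockTele M n k}
    (γ : M.Cell (locks M Θ) (locks M Ψ)) :
    ∀ {l : M.Mode} (Γ : SCtx M l) (Ξ : LockTele M k l) (v : VarIn M (appL M Γ Ξ) Θ),
    transf M γ (appL M Γ Ξ) LockTele.nil v =
      cast (varIn_append M Ψ Γ Ξ).symm (transf M γ Γ Ξ (cast (varIn_append M Θ Γ Ξ) v))
  | _, Γ, .nil, v => rfl
  | _, Γ, .cons ρ Ξ, v => transf_appL γ (SCtx.lock Γ ρ) Ξ v


theorem transf_sucv {n k l j : M.Mode} {Θ Ψ : LockTele M n k}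
    (γ : M.Cell (locks M Θ) (locks M Ψ)) {Γ : SCtx M l} (μ : M.Hom j l)
    (Ξ : LockTele M k l) (w : VarIn M Γ (appLT M Ξ Θ)) :
    transf M γ (SCtx.ext Γ μ) Ξ (VarIn.sucv M w) =
      VarIn.sucv M (transf M γ Γ Ξ w) := rfl

theorem transf_vz {n k l : M.Mode} {Θ Ψ : LockTele M n k}
    (γ : M.Cell (locks M Θ) (locks M Ψ)) {Γ : SCtx M l} (μ : M.Hom n l)
    (Ξ : LockTele M k l) (β₀ : M.Cell μ (locks M (appLT M Ξ Θ))) :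
    transf M γ (SCtx.ext Γ μ) Ξ (VarIn.vz M β₀) =
      VarIn.vz M (M.vcomp β₀
        (castCell M (locks_append M Ξ Θ).symm (locks_append M Ξ Ψ).symm
          (M.hcomp γ (M.cid (locks M Ξ))))) := rfl

theorem cell_core1' {o n m l : M.Mode} {A₁ A₂ : LockTele M o n} {B₁ B₂ : LockTele M n m}
    (a : M.Cell (locks M A₁) (locks M A₂)) (b : M.Cell (locks M B₁) (locks M B₂))
    (Ξ : LockTele M m l) {μ : M.Hom o l}
    (β₀ : M.Cell μ (locks M (appLT M Ξ (appLT M B₁ A₁)))) :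
    HEq
      (M.vcomp β₀ (castCell M (locks_append M Ξ (appLT M B₁ A₁)).symm
        (locks_append M Ξ (appLT M B₂ A₂)).symm
        (M.hcomp (castCell M (locks_append M B₁ A₁).symm (locks_append M B₂ A₂).symm
          (M.hcomp a b)) (M.cid (locks M Ξ)))))
      (M.vcomp
        (castCell M rfl (congrArg (locks M) (appLT_assoc M Ξ B₂ A₁).symm)
          (M.vcomp β₀ (castCell M (locks_append M Ξ (appLT M B₁ A₁)).symm
            (locks_append M Ξ (appLT M B₂ A₁)).symm
            (M.hcomp (castCell M (locks_append M B₁ A₁).symm (locks_append M B₂ A₁).symm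
              (M.hcomp (M.cid (locks M A₁)) b)) (M.cid (locks M Ξ))))))
        (castCell M (locks_append M (appLT M Ξ B₂) A₁).symm
          (locks_append M (appLT M Ξ B₂) A₂).symm
          (M.hcomp a (M.cid (locks M (appLT M Ξ B₂)))))) := by
  have E₁ : locks M (appLT M Ξ (appLT M B₁ A₁)) =
      M.comp (M.comp (locks M A₁) (locks M B₁)) (locks M Ξ) := by simp [locks_append]
  have E₂ : locks M (appLT M Ξ (appLT M B₂ A₂)) =
      M.comp (M.comp (locks M A₂) (locks M B₂)) (locks M Ξ) := by simp [locks_append]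
  have E₃ : locks M (appLT M Ξ (appLT M B₂ A₁)) =
      M.comp (M.comp (locks M A₁) (locks M B₂)) (locks M Ξ) := by simp [locks_append]
  have E₄ : locks M (appLT M (appLT M Ξ B₂) A₁) =
      M.comp (M.comp (locks M A₁) (locks M B₂)) (locks M Ξ) := by
    simp [locks_append, M.comp_assoc]
  have E₅ : locks M (appLT M (appLT M Ξ B₂) A₂) =
      M.comp (M.comp (locks M A₂) (locks M B₂)) (locks M Ξ) := by
    simp [locks_append, M.comp_assoc]
  have E₆ : locks M (appLT M Ξ B₂) = M.comp (locks M B₂) (locks M Ξ) :=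
    locks_append M Ξ B₂
  set β₀' : M.Cell μ (M.comp (M.comp (locks M A₁) (locks M B₁)) (locks M Ξ)) :=
    castCell M rfl E₁ β₀ with hβ₀'
  have hL : HEq
      (M.vcomp β₀ (castCell M (locks_append M Ξ (appLT M B₁ A₁)).symm
        (locks_append M Ξ (appLT M B₂ A₂)).symm
        (M.hcomp (castCell M (locks_append M B₁ A₁).symm (locks_append M B₂ A₂).symm
          (M.hcomp a b)) (M.cid (locks M Ξ)))))
      (M.vcomp β₀' (M.hcomp (M.hcomp a b) (M.cid (locks M Ξ)))) := by
    refine vcomp_heq M rfl E₁ E₂ (castCell_heq M rfl E₁ β₀).symm ?_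
    refine (castCell_heq M _ _ _).trans ?_
    exact hcomp_heq2 M (locks_append M B₁ A₁) (locks_append M B₂ A₂) rfl rfl
      (castCell_heq M _ _ _) HEq.rfl
  have hM : M.vcomp β₀' (M.hcomp (M.hcomp a b) (M.cid (locks M Ξ))) =
      M.vcomp β₀'
        (M.vcomp (M.hcomp (M.hcomp (M.cid (locks M A₁)) b) (M.cid (locks M Ξ)))
          (castCell M (M.comp_assoc (locks M A₁) (locks M B₂) (locks M Ξ)).symm
            (M.comp_assoc (locks M A₂) (locks M B₂) (locks M Ξ)).symm
            (M.hcomp a (M.cid (M.comp (locks M B₂) (locks M Ξ)))))) :=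
    congrArg (M.vcomp β₀') (cell_core1 M a b (locks M Ξ))
  have hR : HEq
      (M.vcomp β₀'
        (M.vcomp (M.hcomp (M.hcomp (M.cid (locks M A₁)) b) (M.cid (locks M Ξ)))
          (castCell M (M.comp_assoc (locks M A₁) (locks M B₂) (locks M Ξ)).symm
            (M.comp_assoc (locks M A₂) (locks M B₂) (locks M Ξ)).symm
            (M.hcomp a (M.cid (M.comp (locks M B₂) (locks M Ξ)))))))
      (M.vcomp
        (castCell M rfl (congrArg (locks M) (appLT_assoc M Ξ B₂ A₁).symm)
          (M.vcomp β₀ (castCell M (locks_append M Ξ (appLT M B₁ A₁)).symm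
            (locks_append M Ξ (appLT M B₂ A₁)).symm
            (M.hcomp (castCell M (locks_append M B₁ A₁).symm (locks_append M B₂ A₁).symm
              (M.hcomp (M.cid (locks M A₁)) b)) (M.cid (locks M Ξ))))))
        (castCell M (locks_append M (appLT M Ξ B₂) A₁).symm
          (locks_append M (appLT M Ξ B₂) A₂).symm
          (M.hcomp a (M.cid (locks M (appLT M Ξ B₂)))))) := by
    rw [← M.vcomp_assoc]
    refine vcomp_heq M rfl E₄.symm E₅.symm ?_ ?_
    · refine HEq.trans ?_ (castCell_heq M rfl
        (congrArg (locks M) (appLT_assoc M Ξ B₂ A₁).symm) _).symm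
      refine vcomp_heq M rfl E₁.symm E₃.symm (castCell_heq M rfl E₁ β₀) ?_
      refine HEq.symm ?_
      refine (castCell_heq M _ _ _).trans ?_
      exact hcomp_heq2 M (locks_append M B₁ A₁) (locks_append M B₂ A₁) rfl rfl
        (castCell_heq M _ _ _) HEq.rfl
    · refine HEq.trans (castCell_heq M _ _ _) ?_
      refine HEq.trans ?_ (castCell_heq M _ _ _).symm
      exact hcomp_heq2 M rfl rfl E₆.symm E₆.symm HEq.rfl (cid_heq M E₆.symm)
  exact hL.trans ((heq_of_eq hM).trans hR)


theorem core1 {o n m : M.Mode} (A₁ A₂ : LockTele M o n) (B₁ B₂ : LockTele M n m)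
    (a : M.Cell (locks M A₁) (locks M A₂)) (b : M.Cell (locks M B₁) (locks M B₂)) :
    ∀ {l : M.Mode} (Γ : SCtx M l) (Ξ : LockTele M m l)
      (v : VarIn M Γ (appLT M Ξ (appLT M B₁ A₁))),
    HEq
      (transf M (castCell M (locks_append M B₁ A₁).symm (locks_append M B₂ A₂).symm
        (M.hcomp a b)) Γ Ξ v)
      (transf M a Γ (appLT M Ξ B₂)
        (cast (congrArg (VarIn M Γ) (appLT_assoc M Ξ B₂ A₁).symm)
          (transf M (castCell M (locks_append M B₁ A₁).symm (locks_append M B₂ A₁).symm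
            (M.hcomp (M.cid (locks M A₁)) b)) Γ Ξ v)))
  | _, .empty, Ξ, v => PEmpty.elim v
  | _, .lock Γ ρ, Ξ, v => core1 A₁ A₂ B₁ B₂ a b Γ (LockTele.cons ρ Ξ) v
  | _, .ext Γ μ, Ξ, v => by
      cases v with
      | inr w =>
        show HEq
          (transf M _ (SCtx.ext Γ μ) Ξ (VarIn.sucv M w))
          (transf M a (SCtx.ext Γ μ) (appLT M Ξ B₂)
            (cast _ (transf M _ (SCtx.ext Γ μ) Ξ (VarIn.sucv M w))))
        rw [transf_sucv, transf_sucv, castVar_inr, transf_sucv]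
        · exact sucv_heq M μ (appLT_assoc M Ξ B₂ A₂).symm (core1 A₁ A₂ B₁ B₂ a b Γ Ξ w)
        · exact (appLT_assoc M Ξ B₂ A₁).symm
      | inl p =>
        obtain ⟨h, β₀⟩ := p
        cases h
        show HEq
          (transf M _ (SCtx.ext Γ μ) Ξ (VarIn.vz M β₀))
          (transf M a (SCtx.ext Γ μ) (appLT M Ξ B₂)
            (cast _ (transf M _ (SCtx.ext Γ μ) Ξ (VarIn.vz M β₀))))
        rw [transf_vz, transf_vz, castVar_inl, transf_vz]
        · exact vz_heq M μ (appLT_assoc M Ξ B₂ A₂).symm (cell_core1' M a b Ξ β₀)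
        · exact (appLT_assoc M Ξ B₂ A₁).symm


theorem cell_core2' {o n m l : M.Mode} {A₁ A₂ : LockTele M o n} {B₁ B₂ : LockTele M n m}
    (a : M.Cell (locks M A₁) (locks M A₂)) (b : M.Cell (locks M B₁) (locks M B₂))
    (Ξ : LockTele M m l) {μ : M.Hom o l}
    (β₀ : M.Cell μ (locks M (appLT M Ξ (appLT M B₁ A₁)))) :
    HEq
      (M.vcomp β₀ (castCell M (locks_append M Ξ (appLT M B₁ A₁)).symm
        (locks_append M Ξ (appLT M B₂ A₂)).symm
        (M.hcomp (castCell M (locks_append M B₁ A₁).symm (locks_append M B₂ A₂).symm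
          (M.hcomp a b)) (M.cid (locks M Ξ)))))
      (M.vcomp
        (castCell M rfl (congrArg (locks M) (appLT_assoc M Ξ B₁ A₂))
          (M.vcomp (castCell M rfl (congrArg (locks M) (appLT_assoc M Ξ B₁ A₁).symm) β₀)
            (castCell M (locks_append M (appLT M Ξ B₁) A₁).symm
              (locks_append M (appLT M Ξ B₁) A₂).symm
              (M.hcomp a (M.cid (locks M (appLT M Ξ B₁)))))))
        (castCell M (locks_append M Ξ (appLT M B₁ A₂)).symm
          (locks_append M Ξ (appLT M B₂ A₂)).symm
          (M.hcomp (castCell M (locks_append M B₁ A₂).symm (locks_append M B₂ A₂).symm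
            (M.hcomp (M.cid (locks M A₂)) b)) (M.cid (locks M Ξ))))) := by
  have E₁ : locks M (appLT M Ξ (appLT M B₁ A₁)) =
      M.comp (M.comp (locks M A₁) (locks M B₁)) (locks M Ξ) := by simp [locks_append]
  have E₂ : locks M (appLT M Ξ (appLT M B₂ A₂)) =
      M.comp (M.comp (locks M A₂) (locks M B₂)) (locks M Ξ) := by simp [locks_append]
  have E₃ : locks M (appLT M Ξ (appLT M B₁ A₂)) =
      M.comp (M.comp (locks M A₂) (locks M B₁)) (locks M Ξ) := by simp [locks_append]
  have E₄ : locks M (appLT M (appLT M Ξ B₁) A₁) =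
      M.comp (M.comp (locks M A₁) (locks M B₁)) (locks M Ξ) := by
    simp [locks_append, M.comp_assoc]
  have E₅ : locks M (appLT M (appLT M Ξ B₁) A₂) =
      M.comp (M.comp (locks M A₂) (locks M B₁)) (locks M Ξ) := by
    simp [locks_append, M.comp_assoc]
  have E₆ : locks M (appLT M Ξ B₁) = M.comp (locks M B₁) (locks M Ξ) :=
    locks_append M Ξ B₁
  set β₀' : M.Cell μ (M.comp (M.comp (locks M A₁) (locks M B₁)) (locks M Ξ)) :=
    castCell M rfl E₁ β₀ with hβ₀'
  have hL : HEq
      (M.vcomp β₀ (castCell M (locks_append M Ξ (appLT M B₁ A₁)).symm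
        (locks_append M Ξ (appLT M B₂ A₂)).symm
        (M.hcomp (castCell M (locks_append M B₁ A₁).symm (locks_append M B₂ A₂).symm
          (M.hcomp a b)) (M.cid (locks M Ξ)))))
      (M.vcomp β₀' (M.hcomp (M.hcomp a b) (M.cid (locks M Ξ)))) := by
    refine vcomp_heq M rfl E₁ E₂ (castCell_heq M rfl E₁ β₀).symm ?_
    refine (castCell_heq M _ _ _).trans ?_
    exact hcomp_heq2 M (locks_append M B₁ A₁) (locks_append M B₂ A₂) rfl rfl
      (castCell_heq M _ _ _) HEq.rfl
  have hM : M.vcomp β₀' (M.hcomp (M.hcomp a b) (M.cid (locks M Ξ))) =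
      M.vcomp β₀'
        (M.vcomp
          (castCell M (M.comp_assoc (locks M A₁) (locks M B₁) (locks M Ξ)).symm
            (M.comp_assoc (locks M A₂) (locks M B₁) (locks M Ξ)).symm
            (M.hcomp a (M.cid (M.comp (locks M B₁) (locks M Ξ)))))
          (M.hcomp (M.hcomp (M.cid (locks M A₂)) b) (M.cid (locks M Ξ)))) :=
    congrArg (M.vcomp β₀') (cell_core2 M a b (locks M Ξ))
  have hR : HEq
      (M.vcomp β₀'
        (M.vcomp
          (castCell M (M.comp_assoc (locks M A₁) (locks M B₁) (locks M Ξ)).symm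
            (M.comp_assoc (locks M A₂) (locks M B₁) (locks M Ξ)).symm
            (M.hcomp a (M.cid (M.comp (locks M B₁) (locks M Ξ)))))
          (M.hcomp (M.hcomp (M.cid (locks M A₂)) b) (M.cid (locks M Ξ)))))
      (M.vcomp
        (castCell M rfl (congrArg (locks M) (appLT_assoc M Ξ B₁ A₂))
          (M.vcomp (castCell M rfl (congrArg (locks M) (appLT_assoc M Ξ B₁ A₁).symm) β₀)
            (castCell M (locks_append M (appLT M Ξ B₁) A₁).symm
              (locks_append M (appLT M Ξ B₁) A₂).symm
              (M.hcomp a (M.cid (locks M (appLT M Ξ B₁)))))))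
        (castCell M (locks_append M Ξ (appLT M B₁ A₂)).symm
          (locks_append M Ξ (appLT M B₂ A₂)).symm
          (M.hcomp (castCell M (locks_append M B₁ A₂).symm (locks_append M B₂ A₂).symm
            (M.hcomp (M.cid (locks M A₂)) b)) (M.cid (locks M Ξ))))) := by
    rw [← M.vcomp_assoc]
    refine vcomp_heq M rfl E₃.symm E₂.symm ?_ ?_
    · refine HEq.trans ?_ (castCell_heq M rfl
        (congrArg (locks M) (appLT_assoc M Ξ B₁ A₂)) _).symm
      refine vcomp_heq M rfl E₄.symm E₅.symm ?_ ?_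
      · exact (castCell_heq M rfl E₁ β₀).trans (castCell_heq M rfl _ β₀).symm
      · refine HEq.trans (castCell_heq M _ _ _) ?_
        refine HEq.trans ?_ (castCell_heq M _ _ _).symm
        exact hcomp_heq2 M rfl rfl E₆.symm E₆.symm HEq.rfl (cid_heq M E₆.symm)
    · refine HEq.symm ?_
      refine (castCell_heq M _ _ _).trans ?_
      exact hcomp_heq2 M (locks_append M B₁ A₂) (locks_append M B₂ A₂) rfl rfl
        (castCell_heq M _ _ _) HEq.rfl
  exact hL.trans ((heq_of_eq hM).trans hR)

theorem core2 {o n m : M.Mode} (A₁ A₂ : LockTele M o n) (B₁ B₂ : LockTele M n m)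
    (a : M.Cell (locks M A₁) (locks M A₂)) (b : M.Cell (locks M B₁) (locks M B₂)) :
    ∀ {l : M.Mode} (Γ : SCtx M l) (Ξ : LockTele M m l)
      (v : VarIn M Γ (appLT M Ξ (appLT M B₁ A₁))),
    HEq
      (transf M (castCell M (locks_append M B₁ A₁).symm (locks_append M B₂ A₂).symm
        (M.hcomp a b)) Γ Ξ v)
      (transf M (castCell M (locks_append M B₁ A₂).symm (locks_append M B₂ A₂).symm
          (M.hcomp (M.cid (locks M A₂)) b)) Γ Ξ
        (cast (congrArg (VarIn M Γ) (appLT_assoc M Ξ B₁ A₂))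
          (transf M a Γ (appLT M Ξ B₁)
            (cast (congrArg (VarIn M Γ) (appLT_assoc M Ξ B₁ A₁).symm) v))))
  | _, .empty, Ξ, v => PEmpty.elim v
  | _, .lock Γ ρ, Ξ, v => core2 A₁ A₂ B₁ B₂ a b Γ (LockTele.cons ρ Ξ) v
  | _, .ext Γ μ, Ξ, v => by
      cases v with
      | inr w =>
        show HEq
          (transf M _ (SCtx.ext Γ μ) Ξ (VarIn.sucv M w))
          (transf M _ (SCtx.ext Γ μ) Ξ
            (cast _ (transf M a (SCtx.ext Γ μ) (appLT M Ξ B₁)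
              (cast _ (VarIn.sucv M w)))))
        rw [transf_sucv, castVar_inr, transf_sucv, castVar_inr, transf_sucv]
        · exact sucv_heq M μ rfl (core2 A₁ A₂ B₁ B₂ a b Γ Ξ w)
        · exact appLT_assoc M Ξ B₁ A₂
        · exact (appLT_assoc M Ξ B₁ A₁).symm
      | inl p =>
        obtain ⟨h, β₀⟩ := p
        cases h
        show HEq
          (transf M _ (SCtx.ext Γ μ) Ξ (VarIn.vz M β₀))
          (transf M _ (SCtx.ext Γ μ) Ξ
            (cast _ (transf M a (SCtx.ext Γ μ) (appLT M Ξ B₁)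
              (cast _ (VarIn.vz M β₀)))))
        rw [transf_vz, castVar_inl, transf_vz, castVar_inl, transf_vz]
        · exact vz_heq M μ rfl (cell_core2' M a b Ξ β₀)
        · exact appLT_assoc M Ξ B₁ A₂
        · exact (appLT_assoc M Ξ B₁ A₁).symm


theorem arenVar_key {m n : M.Mode} (Γ : SCtx M m) (Θ Ψ : LockTele M n m)
    (α : M.Cell (locks M Θ) (locks M Ψ)) {p : M.Mode} (Λ : LockTele M p n)
    (v : VarIn M (appL M Γ Θ) Λ) :
    arenVar M (ARen.key Γ Θ Ψ α) Λ v =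
      cast (varIn_append M Λ Γ Ψ).symm
        (transf M (castCell M (locks_append M Θ Λ).symm (locks_append M Ψ Λ).symm
          (M.hcomp (M.cid (locks M Λ)) α)) Γ LockTele.nil
          (cast (varIn_append M Λ Γ Θ) v)) := rfl

theorem keyCell_bridge {m n o p : M.Mode} (Λ₁ Λ₂ : LockTele M n m) (Θ₁ Θ₂ : LockTele M o n)
    (β : M.Cell (locks M Λ₁) (locks M Λ₂)) (α : M.Cell (locks M Θ₁) (locks M Θ₂))
    (Λ : LockTele M p o) :
    HEq
      (castCell M (locks_append M (appLT M Λ₁ Θ₁) Λ).symm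
        (locks_append M (appLT M Λ₂ Θ₂) Λ).symm
        (M.hcomp (M.cid (locks M Λ))
          (castCell M (locks_append M Λ₁ Θ₁).symm (locks_append M Λ₂ Θ₂).symm
            (M.hcomp α β))))
      (castCell M (locks_append M Λ₁ (appLT M Θ₁ Λ)).symm
        (locks_append M Λ₂ (appLT M Θ₂ Λ)).symm
        (M.hcomp (castCell M (locks_append M Θ₁ Λ).symm (locks_append M Θ₂ Λ).symm
          (M.hcomp (M.cid (locks M Λ)) α)) β)) := by
  refine (castCell_heq M _ _ _).trans (HEq.trans ?_ (castCell_heq M _ _ _).symm)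
  refine HEq.trans (hcomp_heq2 M rfl rfl (locks_append M Λ₁ Θ₁) (locks_append M Λ₂ Θ₂)
    HEq.rfl (castCell_heq M _ _ _)) ?_
  refine HEq.trans (M.hcomp_assoc (M.cid (locks M Λ)) α β).symm ?_
  exact hcomp_heq2 M (locks_append M Θ₁ Λ).symm (locks_append M Θ₂ Λ).symm rfl rfl
    (castCell_heq M _ _ _).symm HEq.rfl

theorem key_var1 {m n o : M.Mode} (Γ : SCtx M m) (Λ₁ Λ₂ : LockTele M n m)
    (Θ₁ Θ₂ : LockTele M o n) (β : M.Cell (locks M Λ₁) (locks M Λ₂))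
    (α : M.Cell (locks M Θ₁) (locks M Θ₂)) {p : M.Mode} (Λ : LockTele M p o)
    (v : VarIn M (appL M (appL M Γ Λ₁) Θ₁) Λ) :
    cast (congrArg (fun C => VarIn M C Λ) (appL_append M Γ Λ₂ Θ₂).symm)
      (arenVar M (ARen.key Γ (appLT M Λ₁ Θ₁) (appLT M Λ₂ Θ₂)
          (castCell M (locks_append M Λ₁ Θ₁).symm (locks_append M Λ₂ Θ₂).symm
            (M.hcomp α β))) Λ
        (cast (congrArg (fun C => VarIn M C Λ) (appL_append M Γ Λ₁ Θ₁)) v)) =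
      arenVar M (ARen.key (appL M Γ Λ₂) Θ₁ Θ₂ α) Λ
        (arenVar M (lockTeleA M (ARen.key Γ Λ₁ Λ₂ β) Θ₁) Λ v) := by
  apply eq_of_heq
  rw [arenVar_key, arenVar_key, arenVar_lockTeleA, arenVar_key]
  erw [transf_appL]
  have hv : HEq
      (cast (varIn_append M Λ Γ (appLT M Λ₁ Θ₁))
        (cast (congrArg (fun C => VarIn M C Λ) (appL_append M Γ Λ₁ Θ₁)) v))
      (cast (varIn_append M (appLT M Θ₁ Λ) Γ Λ₁)
        (cast (varIn_append M Λ (appL M Γ Λ₁) Θ₁) v)) :=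
    ((cast_heq _ _).trans (cast_heq _ _)).trans
      (((cast_heq _ _).trans (cast_heq _ _)).symm)
  refine HEq.trans ((cast_heq _ _).trans (cast_heq _ _)) ?_
  refine HEq.trans (transf_congr M (appLT_assoc M Λ₁ Θ₁ Λ) (appLT_assoc M Λ₂ Θ₂ Λ)
    (keyCell_bridge M Λ₁ Λ₂ Θ₁ Θ₂ β α Λ) Γ LockTele.nil hv) ?_
  refine HEq.trans (core1 M (appLT M Θ₁ Λ) (appLT M Θ₂ Λ) Λ₁ Λ₂
    (castCell M (locks_append M Θ₁ Λ).symm (locks_append M Θ₂ Λ).symm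
      (M.hcomp (M.cid (locks M Λ)) α)) β Γ LockTele.nil
    (cast (varIn_append M (appLT M Θ₁ Λ) Γ Λ₁)
      (cast (varIn_append M Λ (appL M Γ Λ₁) Θ₁) v))) ?_
  refine HEq.trans ?_ ((cast_heq _ _).trans (cast_heq _ _)).symm
  refine heq_of_eq (congrArg (transf M (castCell M (locks_append M Θ₁ Λ).symm
    (locks_append M Θ₂ Λ).symm (M.hcomp (M.cid (locks M Λ)) α)) Γ Λ₂) ?_)
  apply eq_of_heq
  exact (cast_heq _ _).trans (((cast_heq _ _).trans ((cast_heq _ _).trans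
    ((cast_heq _ _).trans (cast_heq _ _)))).symm)


theorem key_var2 {m n o : M.Mode} (Γ : SCtx M m) (Λ₁ Λ₂ : LockTele M n m)
    (Θ₁ Θ₂ : LockTele M o n) (β : M.Cell (locks M Λ₁) (locks M Λ₂))
    (α : M.Cell (locks M Θ₁) (locks M Θ₂)) {p : M.Mode} (Λ : LockTele M p o)
    (v : VarIn M (appL M (appL M Γ Λ₁) Θ₁) Λ) :
    cast (congrArg (fun C => VarIn M C Λ) (appL_append M Γ Λ₂ Θ₂).symm)
      (arenVar M (ARen.key Γ (appLT M Λ₁ Θ₁) (appLT M Λ₂ Θ₂)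
          (castCell M (locks_append M Λ₁ Θ₁).symm (locks_append M Λ₂ Θ₂).symm
            (M.hcomp α β))) Λ
        (cast (congrArg (fun C => VarIn M C Λ) (appL_append M Γ Λ₁ Θ₁)) v)) =
      arenVar M (lockTeleA M (ARen.key Γ Λ₁ Λ₂ β) Θ₂) Λ
        (arenVar M (ARen.key (appL M Γ Λ₁) Θ₁ Θ₂ α) Λ v) := by
  apply eq_of_heq
  rw [arenVar_key, arenVar_key, arenVar_lockTeleA, arenVar_key]
  erw [transf_appL]
  have hv : HEq
      (cast (varIn_append M Λ Γ (appLT M Λ₁ Θ₁))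
        (cast (congrArg (fun C => VarIn M C Λ) (appL_append M Γ Λ₁ Θ₁)) v))
      (cast (varIn_append M (appLT M Θ₁ Λ) Γ Λ₁)
        (cast (varIn_append M Λ (appL M Γ Λ₁) Θ₁) v)) :=
    ((cast_heq _ _).trans (cast_heq _ _)).trans
      (((cast_heq _ _).trans (cast_heq _ _)).symm)
  refine HEq.trans ((cast_heq _ _).trans (cast_heq _ _)) ?_
  refine HEq.trans (transf_congr M (appLT_assoc M Λ₁ Θ₁ Λ) (appLT_assoc M Λ₂ Θ₂ Λ)
    (keyCell_bridge M Λ₁ Λ₂ Θ₁ Θ₂ β α Λ) Γ LockTele.nil hv) ?_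
  refine HEq.trans (core2 M (appLT M Θ₁ Λ) (appLT M Θ₂ Λ) Λ₁ Λ₂
    (castCell M (locks_append M Θ₁ Λ).symm (locks_append M Θ₂ Λ).symm
      (M.hcomp (M.cid (locks M Λ)) α)) β Γ LockTele.nil
    (cast (varIn_append M (appLT M Θ₁ Λ) Γ Λ₁)
      (cast (varIn_append M Λ (appL M Γ Λ₁) Θ₁) v))) ?_
  refine HEq.trans ?_ ((cast_heq _ _).trans (cast_heq _ _)).symm
  refine heq_of_eq (congrArg (transf M (castCell M (locks_append M Λ₁ (appLT M Θ₂ Λ)).symm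
    (locks_append M Λ₂ (appLT M Θ₂ Λ)).symm
    (M.hcomp (M.cid (locks M (appLT M Θ₂ Λ))) β)) Γ LockTele.nil) ?_)
  apply eq_of_heq
  refine HEq.trans (cast_heq _ _) ?_
  refine HEq.trans (heq_of_eq (congrArg (transf M (castCell M (locks_append M Θ₁ Λ).symm
    (locks_append M Θ₂ Λ).symm (M.hcomp (M.cid (locks M Λ)) α)) Γ Λ₁)
    (eq_of_heq (cast_heq _ _)))) ?_
  exact ((cast_heq _ _).trans ((cast_heq _ _).trans
    ((cast_heq _ _).trans (cast_heq _ _)))).symm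

/-- Key renamings compose horizontally. -/
theorem key_hcomp (M : ModeTheory) {m n o : M.Mode} (Γ : SCtx M m)
    (Λ₁ Λ₂ : LockTele M n m) (Θ₁ Θ₂ : LockTele M o n)
    (β : M.Cell (locks M Λ₁) (locks M Λ₂)) (α : M.Cell (locks M Θ₁) (locks M Θ₂))
    (t : Expr M (appL M (appL M Γ Λ₁) Θ₁)) :
    castE M (appL_append M Γ Λ₂ Θ₂).symm
        (arenExpr M (castE M (appL_append M Γ Λ₁ Θ₁) t)
          (ARen.key Γ (appLT M Λ₁ Θ₁) (appLT M Λ₂ Θ₂)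
            (castCell M (locks_append M Λ₁ Θ₁).symm (locks_append M Λ₂ Θ₂).symm
              (M.hcomp α β)))) =
      arenExpr M (arenExpr M t (lockTeleA M (ARen.key Γ Λ₁ Λ₂ β) Θ₁))
        (ARen.key (appL M Γ Λ₂) Θ₁ Θ₂ α) ∧
    castE M (appL_append M Γ Λ₂ Θ₂).symm
        (arenExpr M (castE M (appL_append M Γ Λ₁ Θ₁) t)
          (ARen.key Γ (appLT M Λ₁ Θ₁) (appLT M Λ₂ Θ₂)
            (castCell M (locks_append M Λ₁ Θ₁).symm (locks_append M Λ₂ Θ₂).symm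
              (M.hcomp α β)))) =
      arenExpr M (arenExpr M t (ARen.key (appL M Γ Λ₁) Θ₁ Θ₂ α))
        (lockTeleA M (ARen.key Γ Λ₁ Λ₂ β) Θ₂) := by
  constructor
  · simp only [aren_gen M]
    rw [gen_comp M, gen_cast M (appL_append M Γ Λ₂ Θ₂) (appL_append M Γ Λ₁ Θ₁)]
    exact congrArg (genExpr M t)
      (funext fun n' => funext fun Λ => funext fun v =>
        key_var1 M Γ Λ₁ Λ₂ Θ₁ Θ₂ β α Λ v)
  · simp only [aren_gen M]
    rw [gen_comp M, gen_cast M (appL_append M Γ Λ₂ Θ₂) (appL_append M Γ Λ₁ Θ₁)]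
    exact congrArg (genExpr M t)
      (funext fun n' => funext fun Λ => funext fun v =>
        key_var2 M Γ Λ₁ Λ₂ Θ₁ Θ₂ β α Λ v)

end MTT
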